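/- arXiv:1111.4604 — 8 statements merged into one kernel-verified Lean document; each statement's English description precedes it below -/
import Mathlib

section
/- Let g be an orientation-preserving homeomorphism of the interval [0,π] (a continuous strictly increasing bijection of [0,π] onto itself) whose set of fixed points is finite, consisting of 0 = φ_{-k} < φ_{-k+1} < … < φ_0 < … < φ_{k-1} < φ_k = π (an odd number 2k+1 of fixed points). Suppose that for each 0 ≤ i < k one of the two following alternatives holds: either (g(φ) > φ for all φ ∈ (φ_{-i-1}, φ_{-i}) and g(φ) < φ for all φ ∈ (φ_i, φ_{i+1})), i.e. all points of both intervals move under g toward φ_0; or (g(φ) < φ for all φ ∈ (φ_{-i-1}, φ_{-i}) and g(φ) > φ for all φ ∈ (φ_i, φ_{i+1})), i.e. all points of both intervals move away from φ_0. Then there exists an orientation-reversing homeomorphism h of [0,π] (a continuous strictly decreasing bijection of [0,π] onto itself) such that g = h ∘ h, and φ_0 is the unique fixed point of h. -/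
/-!
Between consecutive fixed points `g` moves all points in one direction. Two increasing
homeomorphisms of intervals without interior fixed points, one pushing points up and the other
pushing points down, are conjugate by a decreasing homeomorphism: map a fundamental domain
`[x, g x]` of the first onto a fundamental domain `[g y, y]` of the second by any decreasing
bijection and extend equivariantly along the orbits, which accumulate only at the endpoints.
The hypothesis says that `(φ_{-i-1}, φ_{-i})` and `(φ_i, φ_{i+1})` are moved in opposite
directions, so these conjugacies glue to a decreasing `A : [0, φ_0] → [φ_0, π]` commuting with
`g`, and `h = A` on `[0, φ_0]`, `h = g ∘ A⁻¹` on `[φ_0, π]` is the required square root.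
-/

open Real Set Function

section IntervalPieces

variable {α β : Type*} [LinearOrder α]

theorem Monotone.exists_mem_Ico_succ {p : ℤ → α} (hp : Monotone p) {z : α}
    (hbelow : ∃ n, p n ≤ z) (habove : ∃ n, z < p n) : ∃ n, z ∈ Ico (p n) (p (n + 1)) := by
  obtain ⟨m, hm⟩ := habove
  have hbdd : ∃ m, ∀ n, p n ≤ z → n ≤ m :=
    ⟨m, fun n hn => le_of_not_gt fun h => (hm.trans_le (hp h.le)).not_ge hn⟩
  obtain ⟨n, hn, hmax⟩ := Int.exists_greatest_of_bdd hbdd hbelow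
  exact ⟨n, hn, lt_of_not_ge fun h => (hmax _ h).not_gt (lt_add_one n)⟩

theorem StrictMono.apply_eq_of_mem_Icc_succ {p : ℤ → α} (hp : StrictMono p) {H : ℤ → α → β}
    (hH : ∀ n, H n (p (n + 1)) = H (n + 1) (p (n + 1))) {m n : ℤ} {x : α}
    (hm : x ∈ Icc (p m) (p (m + 1))) (hn : x ∈ Icc (p n) (p (n + 1))) : H m x = H n x := by
  wlog hmn : m ≤ n generalizing m n
  · exact (this hn hm (le_of_not_ge hmn)).symm
  obtain rfl | hlt := hmn.eq_or_lt
  · rfl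
  obtain rfl : n = m + 1 :=
    le_antisymm (le_of_not_gt fun h => (hp h).not_ge (hn.1.trans hm.2)) hlt
  rw [le_antisymm hm.2 hn.1, hH]

theorem StrictMono.exists_eqOn_Icc_succ {p : ℤ → α} (hp : StrictMono p) (H : ℤ → α → β)
    (hH : ∀ n, H n (p (n + 1)) = H (n + 1) (p (n + 1))) :
    ∃ F : α → β, ∀ n, EqOn F (H n) (Icc (p n) (p (n + 1))) := by
  classical
  refine ⟨fun x => if hx : ∃ n, x ∈ Icc (p n) (p (n + 1)) then H hx.choose x else H 0 x,
    fun n x hx => ?_⟩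
  have hex : ∃ n, x ∈ Icc (p n) (p (n + 1)) := ⟨n, hx⟩
  simp only [dif_pos hex]
  exact hp.apply_eq_of_mem_Icc_succ hH hex.choose_spec hx

theorem strictAntiOn_iUnion_Icc_succ [Preorder β] {p : ℤ → α} (hp : Monotone p) {f : α → β}
    (hf : ∀ n, StrictAntiOn f (Icc (p n) (p (n + 1)))) :
    StrictAntiOn f (⋃ n, Icc (p n) (p (n + 1))) := by
  have hIcc : ∀ m n, m ≤ n → StrictAntiOn f (Icc (p m) (p n)) := by
    intro m n hmn
    induction n, hmn using Int.leInduction with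
    | base => exact (subsingleton_Icc_of_ge le_rfl).strictAntiOn f
    | succ n hmn ih =>
      have hn := hp (Int.le_add_one (le_refl n))
      rw [← Icc_union_Icc_eq_Icc (hp hmn) hn]
      exact ih.union (hf n) (isGreatest_Icc (hp hmn)) (isLeast_Icc hn)
  intro x hx y hy hxy
  obtain ⟨m, hm⟩ := mem_iUnion.1 hx
  obtain ⟨n, hn⟩ := mem_iUnion.1 hy
  have hmem : ∀ {k : ℤ} {z : α}, z ∈ Icc (p k) (p (k + 1)) → k ∈ Icc (min m n) (max m n) →
      z ∈ Icc (p (min m n)) (p (max m n + 1)) := fun hz hk =>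
    ⟨(hp hk.1).trans hz.1, hz.2.trans (hp (by linarith [hk.2]))⟩
  exact hIcc _ _ (by omega) (hmem hm ⟨min_le_left _ _, le_max_left _ _⟩)
    (hmem hn ⟨min_le_right _ _, le_max_right _ _⟩) hxy

end IntervalPieces

namespace OrderIso

variable {α : Type*}

section Preorder

variable [Preorder α] (e : α ≃o α)

theorem zpow_add_one_apply (n : ℤ) (x : α) : (e ^ (n + 1)) x = (e ^ n) (e x) := by
  rw [zpow_add_one]; rfl

theorem apply_zpow_apply (n : ℤ) (x : α) : e ((e ^ n) x) = (e ^ (n + 1)) x := by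
  rw [add_comm, zpow_one_add]; rfl

theorem zpow_neg_apply_zpow_apply (n : ℤ) (x : α) : (e ^ (-n)) ((e ^ n) x) = x := by
  rw [zpow_neg]; exact RelIso.inv_apply_self _ _

variable {e}

theorem zpow_apply_eq_self {a : α} (ha : e a = a) (n : ℤ) : (e ^ n) a = a :=
  (MulAction.stabilizer (α ≃o α) a).zpow_mem (show e • a = a from ha) n

theorem inv_apply_eq_self {a : α} (ha : e a = a) : e⁻¹ a = a := by
  simpa using zpow_apply_eq_self ha (-1)

theorem strictMono_zpow_apply {x : α} (hx : x < e x) : StrictMono fun n : ℤ => (e ^ n) x :=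
  strictMono_int_of_lt_succ fun n => by
    simpa only [zpow_add_one_apply] using (e ^ n).strictMono hx

theorem mapsTo_Icc {a b : α} (ha : e a = a) (hb : e b = b) : MapsTo e (Icc a b) (Icc a b) :=
  fun _ hx => ⟨ha ▸ e.monotone hx.1, hb ▸ e.monotone hx.2⟩

theorem mapsTo_Ioo {a b : α} (ha : e a = a) (hb : e b = b) : MapsTo e (Ioo a b) (Ioo a b) :=
  fun _ hx => ⟨ha ▸ e.strictMono hx.1, hb ▸ e.strictMono hx.2⟩

end Preorder

theorem apply_eq_of_image_Icc [PartialOrder α] {e : α ≃o α} {a b : α} (hab : a ≤ b)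
    (he : e '' Icc a b = Icc a b) : e a = a ∧ e b = b :=
  (Icc_eq_Icc_iff (e.monotone hab)).1 (e.image_Icc a b ▸ he)

section ConditionallyComplete

variable [ConditionallyCompleteLinearOrder α] (e : α ≃o α)

theorem apply_ciSup_zpow_apply {x : α} (hx : BddAbove (range fun n : ℤ => (e ^ n) x)) :
    e (⨆ n : ℤ, (e ^ n) x) = ⨆ n : ℤ, (e ^ n) x := by
  rw [e.map_ciSup hx]
  simp only [apply_zpow_apply]
  exact (Equiv.addRight 1).iSup_comp (g := fun n : ℤ => (e ^ n) x)

theorem apply_ciInf_zpow_apply {x : α} (hx : BddBelow (range fun n : ℤ => (e ^ n) x)) :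
    e (⨅ n : ℤ, (e ^ n) x) = ⨅ n : ℤ, (e ^ n) x := by
  rw [e.map_ciInf hx]
  simp only [apply_zpow_apply]
  exact (Equiv.addRight 1).iInf_comp (g := fun n : ℤ => (e ^ n) x)

variable {e}

theorem iUnion_Icc_zpow_apply {a b x : α} (ha : e a = a) (hb : e b = b)
    (hup : ∀ y ∈ Ioo a b, y < e y) (hx : x ∈ Ioo a b) :
    ⋃ n : ℤ, Icc ((e ^ n) x) ((e ^ (n + 1)) x) = Ioo a b := by
  have hmem : ∀ n : ℤ, (e ^ n) x ∈ Ioo a b := fun n =>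
    ⟨zpow_apply_eq_self ha n ▸ (e ^ n).strictMono hx.1,
      zpow_apply_eq_self hb n ▸ (e ^ n).strictMono hx.2⟩
  refine (iUnion_subset fun n => Icc_subset_Ioo (hmem n).1 (hmem (n + 1)).2).antisymm
    fun z hz => ?_
  -- Otherwise the infimum or the supremum of the orbit would be a fixed point inside `(a, b)`.
  have hbelow : ∃ n : ℤ, (e ^ n) x ≤ z := by
    by_contra! H
    have hbdd : BddBelow (range fun n : ℤ => (e ^ n) x) :=
      ⟨z, forall_mem_range.2 fun n => (H n).le⟩
    have hle : z ≤ ⨅ n : ℤ, (e ^ n) x := le_ciInf fun n => (H n).le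
    exact (hup _ ⟨hz.1.trans_le hle, (ciInf_le hbdd 0).trans_lt (hmem 0).2⟩).ne
      (apply_ciInf_zpow_apply e hbdd).symm
  have habove : ∃ n : ℤ, z < (e ^ n) x := by
    by_contra! H
    have hbdd : BddAbove (range fun n : ℤ => (e ^ n) x) := ⟨z, forall_mem_range.2 H⟩
    have hle : (⨆ n : ℤ, (e ^ n) x) ≤ z := ciSup_le H
    exact (hup _ ⟨(hmem 0).1.trans_le (le_ciSup hbdd 0), hle.trans_lt hz.2⟩).ne
      (apply_ciSup_zpow_apply e hbdd).symm
  obtain ⟨n, hn⟩ := (strictMono_zpow_apply (hup x hx)).monotone.exists_mem_Ico_succ hbelow habove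
  exact mem_iUnion.2 ⟨n, Ico_subset_Icc_self hn⟩

theorem iUnion_Icc_zpow_apply_of_apply_lt {a b x : α} (ha : e a = a) (hb : e b = b)
    (hdown : ∀ y ∈ Ioo a b, e y < y) (hx : x ∈ Ioo a b) :
    ⋃ n : ℤ, Icc ((e ^ (n + 1)) x) ((e ^ n) x) = Ioo a b := by
  rw [← iUnion_Icc_zpow_apply (inv_apply_eq_self ha) (inv_apply_eq_self hb)
    (fun y hy => e.lt_symm_apply.2 (hdown y hy)) hx]
  refine Eq.trans (iUnion_congr fun n => ?_)
    (((Equiv.neg ℤ).trans (Equiv.subRight 1)).surjective.iUnion_comp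
      fun n => Icc ((e⁻¹ ^ n) x) ((e⁻¹ ^ (n + 1)) x))
  simp only [Equiv.trans_apply, Equiv.neg_apply, Equiv.subRight_apply, inv_zpow']
  congr 1 <;> congr 2 <;> ring

end ConditionallyComplete

end OrderIso

section Extension

variable {α : Type*} [LinearOrder α] {f : α → α} {a b : α}

theorem StrictMonoOn.exists_orderIso_eqOn_Icc (hf : StrictMonoOn f (Icc a b))
    (himg : f '' Icc a b = Icc a b) : ∃ e : α ≃o α, EqOn e f (Icc a b) := by
  classical
  have hmaps : MapsTo f (Icc a b) (Icc a b) := fun _ hx => himg ▸ mem_image_of_mem f hx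
  set F := (Icc a b).piecewise f id
  have hF : StrictMono F := by
    intro x y hxy
    by_cases hx : x ∈ Icc a b <;> by_cases hy : y ∈ Icc a b <;>
      simp only [F, piecewise_eq_of_mem, piecewise_eq_of_notMem, hx, hy, id, not_false_eq_true]
    · exact hf hx hy hxy
    · exact (hmaps hx).2.trans_lt (lt_of_not_ge fun h => hy ⟨hx.1.trans hxy.le, h⟩)
    · exact (lt_of_not_ge fun h => hx ⟨h, hxy.le.trans hy.2⟩).trans_le (hmaps hy).1
    · exact hxy
  have hFsurj : Surjective F := fun y => by
    by_cases hy : y ∈ Icc a b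
    · obtain ⟨x, hx, rfl⟩ := himg.symm ▸ hy
      exact ⟨x, piecewise_eq_of_mem _ _ _ hx⟩
    · exact ⟨y, piecewise_eq_of_notMem _ _ _ hy⟩
  exact ⟨hF.orderIsoOfSurjective F hFsurj, fun x hx => piecewise_eq_of_mem _ _ _ hx⟩

end Extension

theorem StrictAntiOn.continuousOn_of_image_Icc {f : ℝ → ℝ} {a b : ℝ}
    (hf : StrictAntiOn f (Icc a b)) (himg : f '' Icc a b = Icc a b) : ContinuousOn f (Icc a b) := by
  have hmono : StrictMonoOn (fun x => a + b - f x) (Icc a b) :=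
    fun x hx y hy hxy => sub_lt_sub_left (hf hx hy hxy) _
  have himg' : (fun x => a + b - f x) '' Icc a b = Icc a b := by
    rw [← image_image (fun y => a + b - y), himg, image_const_sub_Icc]
    congr 1 <;> ring
  obtain ⟨e, he⟩ := hmono.exists_orderIso_eqOn_Icc himg'
  have hcont : Continuous fun x => a + b - e x := by fun_prop
  refine hcont.continuousOn.congr fun x hx => ?_
  simp only [he hx]
  ring

theorem StrictAntiOn.eq_of_apply_eq_self {α : Type*} [LinearOrder α] {f : α → α} {s : Set α}
    {a x : α} (hf : StrictAntiOn f s) (ha : a ∈ s) (hfa : f a = a) (hx : x ∈ s) (hfx : f x = x) :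
    x = a := by
  rcases lt_trichotomy x a with h | h | h
  · have := hf hx ha h
    rw [hfa, hfx] at this
    exact absurd h this.not_gt
  · exact h
  · have := hf ha hx h
    rw [hfa, hfx] at this
    exact absurd h this.not_gt

theorem exists_strictAnti_image_Icc {a b c d : ℝ} (hab : a < b) (hcd : c < d) :
    ∃ l : ℝ → ℝ, StrictAnti l ∧ l '' Icc a b = Icc c d ∧ l a = d ∧ l b = c := by
  set l : ℝ → ℝ := fun x => d + (c - d) / (b - a) * (x - a)
  have hl : StrictAnti l := fun x y hxy => by
    have := mul_lt_mul_of_neg_left (sub_lt_sub_right hxy a)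
      (div_neg_of_neg_of_pos (sub_neg.2 hcd) (sub_pos.2 hab))
    simp only [l]
    linarith
  have hla : l a = d := by simp [l]
  have hlb : l b = c := by
    simp only [l]
    field_simp [(sub_pos.2 hab).ne']
    ring
  refine ⟨l, hl, ?_, hla, hlb⟩
  rw [(by fun_prop : Continuous l).continuousOn.image_Icc_of_antitoneOn hab.le
    (hl.antitone.antitoneOn _), hla, hlb]

theorem ite_le_eqOn_Ici {α β : Type*} [LinearOrder α] {f g : α → β} {b : α} (hb : f b = g b) :
    EqOn (fun x => if x ≤ b then f x else g x) g (Ici b) := fun x hx => by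
  obtain rfl | hlt := eq_or_lt_of_le (show b ≤ x from hx)
  · simp [hb]
  · exact if_neg hlt.not_ge

structure IsAntiConj {α : Type*} [LinearOrder α] (f₁ f₂ h : α → α) (s t : Set α) : Prop where
  strictAntiOn : StrictAntiOn h s
  image_eq : h '' s = t
  semiconj : ∀ x ∈ s, h (f₁ x) = f₂ (h x)

namespace IsAntiConj

variable {α : Type*} [LinearOrder α] {f₁ f₂ g₁ g₂ h k : α → α} {s t : Set α} {a b c d u v w : α}

theorem bijOn (hh : IsAntiConj f₁ f₂ h s t) : BijOn h s t :=
  ⟨hh.image_eq ▸ mapsTo_image h s, hh.strictAntiOn.injOn, hh.image_eq ▸ surjOn_image h s⟩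

theorem le_of_le (hh : IsAntiConj f₁ f₂ h (Icc a b) (Icc c d)) (hab : a ≤ b) : c ≤ d :=
  nonempty_Icc.1 (hh.image_eq ▸ (nonempty_Icc.2 hab).image h)

theorem apply_left (hh : IsAntiConj f₁ f₂ h (Icc a b) (Icc c d)) (hab : a ≤ b) : h a = d :=
  (hh.image_eq ▸ hh.strictAntiOn.antitoneOn.map_isLeast (isLeast_Icc hab)).unique
    (isGreatest_Icc (hh.le_of_le hab))

theorem apply_right (hh : IsAntiConj f₁ f₂ h (Icc a b) (Icc c d)) (hab : a ≤ b) : h b = c :=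
  (hh.image_eq ▸ hh.strictAntiOn.antitoneOn.map_isGreatest (isGreatest_Icc hab)).unique
    (isLeast_Icc (hh.le_of_le hab))

theorem congr (hh : IsAntiConj f₁ f₂ h s t) (h₁ : EqOn f₁ g₁ s) (h₂ : EqOn f₂ g₂ t) :
    IsAntiConj g₁ g₂ h s t where
  strictAntiOn := hh.strictAntiOn
  image_eq := hh.image_eq
  semiconj x hx := by rw [← h₁ hx, hh.semiconj x hx, h₂ (hh.bijOn.mapsTo hx)]

theorem of_inv {e₁ e₂ : α ≃o α} (hh : IsAntiConj ⇑e₁⁻¹ ⇑e₂⁻¹ h s t) (hs : MapsTo e₁ s s) :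
    IsAntiConj e₁ e₂ h s t where
  strictAntiOn := hh.strictAntiOn
  image_eq := hh.image_eq
  semiconj x hx := by
    have := congrArg e₂ (hh.semiconj _ (hs hx))
    rwa [RelIso.inv_apply_self, RelIso.apply_inv_self, eq_comm] at this

theorem comp_left (hh : IsAntiConj f₁ f₂ h s t) (hf₂ : StrictMonoOn f₂ t) (ht : f₂ '' t = t) :
    IsAntiConj f₁ f₂ (f₂ ∘ h) s t where
  strictAntiOn := hf₂.comp_strictAntiOn hh.strictAntiOn hh.bijOn.mapsTo
  image_eq := by rw [image_comp, hh.image_eq, ht]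
  semiconj x hx := by simp only [comp_apply, hh.semiconj x hx]

theorem symm [Nonempty α] (hh : IsAntiConj f₁ f₂ h s t) (hs : MapsTo f₁ s s) :
    IsAntiConj f₂ f₁ (invFunOn h s) t s := by
  have hinv := hh.bijOn.invOn_invFunOn
  have hbij : BijOn (invFunOn h s) t s := hh.bijOn.symm hinv.symm
  refine ⟨fun y hy y' hy' hlt => lt_of_not_ge fun hle => hlt.not_ge ?_, hbij.image_eq,
    fun y hy => ?_⟩
  · exact (hinv.2 hy').symm.trans_le
      ((hh.strictAntiOn.antitoneOn (hbij.mapsTo hy) (hbij.mapsTo hy') hle).trans_eq (hinv.2 hy))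
  · have hx := hbij.mapsTo hy
    calc invFunOn h s (f₂ y) = invFunOn h s (h (f₁ (invFunOn h s y))) := by
          rw [hh.semiconj _ hx, hinv.2 hy]
      _ = f₁ (invFunOn h s y) := hinv.1 (hs hx)

theorem piecewise (hh : IsAntiConj f₁ f₂ h (Icc a b) (Icc v w))
    (hk : IsAntiConj f₁ f₂ k (Icc b c) (Icc u v)) (hab : a ≤ b) (hbc : b ≤ c)
    (hf₁ : StrictMonoOn f₁ (Icc a c)) (hb : f₁ b = b) :
    IsAntiConj f₁ f₂ (fun x => if x ≤ b then h x else k x) (Icc a c) (Icc u w) := by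
  have hleft : EqOn (fun x => if x ≤ b then h x else k x) h (Icc a b) := fun x hx => if_pos hx.2
  have hright : EqOn (fun x => if x ≤ b then h x else k x) k (Icc b c) :=
    (ite_le_eqOn_Ici ((hh.apply_right hab).trans (hk.apply_left hbc).symm)).mono Icc_subset_Ici_self
  refine ⟨?_, ?_, fun x hx => ?_⟩
  · rw [← Icc_union_Icc_eq_Icc hab hbc]
    exact (hh.strictAntiOn.congr hleft.symm).union (hk.strictAntiOn.congr hright.symm)
      (isGreatest_Icc hab) (isLeast_Icc hbc)
  · rw [← Icc_union_Icc_eq_Icc hab hbc, image_union, hleft.image_eq, hright.image_eq, hh.image_eq,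
      hk.image_eq, union_comm, Icc_union_Icc_eq_Icc (hk.le_of_le hbc) (hh.le_of_le hab)]
  · have hbmem : b ∈ Icc a c := ⟨hab, hbc⟩
    have hle : f₁ x ≤ b ↔ x ≤ b := by rw [← hf₁.le_iff_le hx hbmem, hb]
    simp only [hle]
    split_ifs with hxb
    · exact hh.semiconj x ⟨hx.1, hxb⟩
    · exact hk.semiconj x ⟨(not_le.1 hxb).le, hx.2⟩

theorem Icc_of_Ioo (hh : IsAntiConj f₁ f₂ h (Ioo a b) (Ioo c d)) (hab : a < b) (hcd : c < d)
    (ha : f₁ a = a) (hb : f₁ b = b) (hc : f₂ c = c) (hd : f₂ d = d)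
    (hf₁ : MapsTo f₁ (Ioo a b) (Ioo a b)) :
    IsAntiConj f₁ f₂ (fun x => if x ≤ a then d else if b ≤ x then c else h x) (Icc a b)
      (Icc c d) := by
  set H := fun x => if x ≤ a then d else if b ≤ x then c else h x
  have hHa : H a = d := if_pos le_rfl
  have hHb : H b = c := by simp [H, hab.not_ge]
  have hHh : EqOn H h (Ioo a b) := fun x hx => by simp [H, hx.1.not_ge, hx.2.not_ge]
  have hmem : ∀ x ∈ Ioo a b, H x ∈ Ioo c d := fun x hx => hHh hx ▸ hh.bijOn.mapsTo hx
  have hIcc : ∀ {p q : α}, p < q → Icc p q = insert q (insert p (Ioo p q)) := fun hpq => by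
    rw [Ioo_insert_left hpq, Ico_insert_right hpq.le]
  refine ⟨?_, ?_, fun x hx => ?_⟩
  · rw [hIcc hab, strictAntiOn_insert_iff_of_forall_le fun x hx => ?_,
      strictAntiOn_insert_iff_of_forall_ge fun x hx => hx.1.le]
    · refine ⟨?_, fun y hy _ => hHa ▸ (hmem y hy).2, hh.strictAntiOn.congr hHh.symm⟩
      rintro y (rfl | hy) -
      · rwa [hHa, hHb]
      · exact hHb ▸ (hmem y hy).1
    · rcases hx with rfl | hx
      exacts [hab.le, hx.2.le]
  · rw [hIcc hab, image_insert_eq, image_insert_eq, hHa, hHb, hHh.image_eq, hh.image_eq,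
      insert_comm, hIcc hcd]
  · rcases eq_endpoints_or_mem_Ioo_of_mem_Icc hx with rfl | rfl | hx
    · rw [ha, hHa, hd]
    · rw [hb, hHb, hc]
    · rw [hHh hx, hHh (hf₁ hx), hh.semiconj x hx]

end IsAntiConj

section Construction

open OrderIso

variable {α : Type*} [LinearOrder α]

theorem exists_isAntiConj_iUnion {e₁ e₂ : α ≃o α} {x y : α} {l : α → α} (hx : x < e₁ x)
    (hl : StrictAnti l) (himg : l '' Icc x (e₁ x) = Icc (e₂ y) y) (hlx : l x = y)
    (hlx' : l (e₁ x) = e₂ y) :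
    ∃ h, IsAntiConj e₁ e₂ h (⋃ n : ℤ, Icc ((e₁ ^ n) x) ((e₁ ^ (n + 1)) x))
      (⋃ n : ℤ, Icc ((e₂ ^ (n + 1)) y) ((e₂ ^ n) y)) := by
  -- The conjugacy is `e₂ⁿ ∘ l ∘ e₁⁻ⁿ` on the fundamental domain `[e₁ⁿ x, e₁ⁿ⁺¹ x]`.
  set H : ℤ → α → α := fun n z => (e₂ ^ n) (l ((e₁ ^ (-n)) z))
  have hH : ∀ n z, H n ((e₁ ^ n) z) = (e₂ ^ n) (l z) := fun n z => by
    simp only [H, zpow_neg_apply_zpow_apply]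
  have hHsucc : ∀ n z, H (n + 1) (e₁ z) = e₂ (H n z) := fun n z => by
    simp only [H, ← zpow_add_one_apply, apply_zpow_apply, neg_add, neg_add_cancel_right]
  have hHanti : ∀ n, StrictAnti (H n) := fun n =>
    (e₂ ^ n).strictMono.comp_strictAnti (hl.comp_strictMono (e₁ ^ (-n)).strictMono)
  have hHimg : ∀ n, H n '' Icc ((e₁ ^ n) x) ((e₁ ^ (n + 1)) x) =
      Icc ((e₂ ^ (n + 1)) y) ((e₂ ^ n) y) := fun n => by
    rw [zpow_add_one_apply, zpow_add_one_apply, ← image_Icc, ← image_Icc, ← himg, image_image,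
      image_image]
    simp only [hH]
  have hp := strictMono_zpow_apply hx
  obtain ⟨h, hh⟩ := hp.exists_eqOn_Icc_succ H fun n => by
    rw [hH (n + 1), zpow_add_one_apply e₁, hH, hlx, hlx', zpow_add_one_apply]
  refine ⟨h, strictAntiOn_iUnion_Icc_succ hp.monotone fun n =>
    ((hHanti n).strictAntiOn _).congr (hh n).symm, ?_, fun z hz => ?_⟩
  · rw [image_iUnion]
    exact iUnion_congr fun n => (hh n).image_eq.trans (hHimg n)
  · obtain ⟨n, hn⟩ := mem_iUnion.1 hz
    have hn' : e₁ z ∈ Icc ((e₁ ^ (n + 1)) x) ((e₁ ^ (n + 1 + 1)) x) := by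
      rw [← apply_zpow_apply, ← apply_zpow_apply]
      exact ⟨e₁.monotone hn.1, e₁.monotone hn.2⟩
    rw [hh n hn, hh (n + 1) hn', hHsucc]

theorem exists_isAntiConj_of_lt_of_lt {e₁ e₂ : ℝ ≃o ℝ} {a b c d : ℝ} (hab : a < b) (hcd : c < d)
    (ha : e₁ a = a) (hb : e₁ b = b) (hc : e₂ c = c) (hd : e₂ d = d)
    (hup : ∀ x ∈ Ioo a b, x < e₁ x) (hdown : ∀ y ∈ Ioo c d, e₂ y < y) :
    ∃ h, IsAntiConj e₁ e₂ h (Icc a b) (Icc c d) := by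
  have hx : (a + b) / 2 ∈ Ioo a b := ⟨by linarith, by linarith⟩
  have hy : (c + d) / 2 ∈ Ioo c d := ⟨by linarith, by linarith⟩
  obtain ⟨l, hl, himg, hlx, hlx'⟩ := exists_strictAnti_image_Icc (hup _ hx) (hdown _ hy)
  obtain ⟨h, hh⟩ := exists_isAntiConj_iUnion (hup _ hx) hl himg hlx hlx'
  rw [iUnion_Icc_zpow_apply ha hb hup hx, iUnion_Icc_zpow_apply_of_apply_lt hc hd hdown hy] at hh
  exact ⟨_, hh.Icc_of_Ioo hab hcd ha hb hc hd (mapsTo_Ioo ha hb)⟩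

theorem exists_isAntiConj {f₁ f₂ : ℝ → ℝ} {a b c d : ℝ} (hab : a < b) (hcd : c < d)
    (hf₁ : StrictMonoOn f₁ (Icc a b)) (hf₁' : f₁ '' Icc a b = Icc a b)
    (hf₂ : StrictMonoOn f₂ (Icc c d)) (hf₂' : f₂ '' Icc c d = Icc c d)
    (hdir : ((∀ x ∈ Ioo a b, x < f₁ x) ∧ ∀ y ∈ Ioo c d, f₂ y < y) ∨
      ((∀ x ∈ Ioo a b, f₁ x < x) ∧ ∀ y ∈ Ioo c d, y < f₂ y)) :
    ∃ h, IsAntiConj f₁ f₂ h (Icc a b) (Icc c d) := by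
  obtain ⟨e₁, he₁⟩ := hf₁.exists_orderIso_eqOn_Icc hf₁'
  obtain ⟨e₂, he₂⟩ := hf₂.exists_orderIso_eqOn_Icc hf₂'
  obtain ⟨ha, hb⟩ := apply_eq_of_image_Icc hab.le (he₁.image_eq.trans hf₁')
  obtain ⟨hc, hd⟩ := apply_eq_of_image_Icc hcd.le (he₂.image_eq.trans hf₂')
  have h₁ : EqOn e₁ f₁ (Ioo a b) := he₁.mono Ioo_subset_Icc_self
  have h₂ : EqOn e₂ f₂ (Ioo c d) := he₂.mono Ioo_subset_Icc_self
  suffices ∃ h, IsAntiConj e₁ e₂ h (Icc a b) (Icc c d) from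
    this.imp fun h hh => hh.congr he₁ he₂
  rcases hdir with ⟨hup, hdown⟩ | ⟨hdown, hup⟩
  · exact exists_isAntiConj_of_lt_of_lt hab hcd ha hb hc hd (fun x hx => h₁ hx ▸ hup x hx)
      fun y hy => h₂ hy ▸ hdown y hy
  · -- `e₁⁻¹` moves points of `(a, b)` up and `e₂⁻¹` moves points of `(c, d)` down.
    obtain ⟨h, hh⟩ := exists_isAntiConj_of_lt_of_lt hab hcd (inv_apply_eq_self ha)
      (inv_apply_eq_self hb) (inv_apply_eq_self hc) (inv_apply_eq_self hd)
      (fun x hx => e₁.lt_symm_apply.2 (h₁ hx ▸ hdown x hx))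
      fun y hy => e₂.symm_apply_lt.2 (h₂ hy ▸ hup y hy)
    exact ⟨h, hh.of_inv (mapsTo_Icc ha hb)⟩

end Construction

section Assembly

variable {α : Type*} [LinearOrder α]

theorem exists_isAntiConj_of_pieces {g : α → α} {φ : ℤ → α} {k : ℕ}
    (hφ : MonotoneOn φ (Icc (-(k : ℤ)) k)) (hg : StrictMonoOn g (Icc (φ (-k)) (φ 0)))
    (hfix : ∀ i : ℤ, 0 ≤ i → i < k → g (φ (-i)) = φ (-i))
    (hpiece : ∀ i : ℤ, 0 ≤ i → i < k →
      ∃ h, IsAntiConj g g h (Icc (φ (-i - 1)) (φ (-i))) (Icc (φ i) (φ (i + 1)))) :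
    ∃ h, IsAntiConj g g h (Icc (φ (-k)) (φ 0)) (Icc (φ 0) (φ k)) := by
  have hle : ∀ i j : ℤ, -(k : ℤ) ≤ i → i ≤ j → j ≤ k → φ i ≤ φ j := fun i j h₁ hij h₂ =>
    hφ ⟨h₁, by omega⟩ ⟨by omega, h₂⟩ hij
  suffices ∀ n : ℕ, n ≤ k → ∃ h, IsAntiConj g g h (Icc (φ (-n)) (φ 0)) (Icc (φ 0) (φ n)) from
    this k le_rfl
  intro n hn
  induction n with
  | zero =>
    refine ⟨id, (subsingleton_Icc_of_ge ?_).strictAntiOn _, ?_, fun _ _ => rfl⟩ <;> simp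
  | succ n ih =>
    obtain ⟨h, hh⟩ := ih (by omega)
    obtain ⟨h', hh'⟩ := hpiece n (by omega) (by omega)
    have h₁ : φ (-n - 1) ≤ φ (-n) := hle _ _ (by omega) (by omega) (by omega)
    have h₂ : φ (-n) ≤ φ 0 := hle _ _ (by omega) (by omega) (by omega)
    have h₃ : φ (-k) ≤ φ (-n - 1) := hle _ _ (by omega) (by omega) (by omega)
    push_cast
    rw [neg_add']
    exact ⟨_, hh'.piecewise hh h₁ h₂ (hg.mono (Icc_subset_Icc h₃ le_rfl))
      (hfix n (by omega) (by omega))⟩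

theorem exists_sqrt_of_isAntiConj {g A : α → α} {a m b : α} (ham : a ≤ m)
    (hg : StrictMonoOn g (Icc a b)) (hg' : g '' Icc a m = Icc a m) (hgm : g m = m)
    (hA : IsAntiConj g g A (Icc a m) (Icc m b)) :
    ∃ h, IsAntiConj g g h (Icc a b) (Icc a b) ∧ (∀ x ∈ Icc a b, h (h x) = g x) ∧ h m = m := by
  have : Nonempty α := ⟨a⟩
  have hmb := hA.le_of_le ham
  have hA' := hA.symm fun _ hx => hg' ▸ mem_image_of_mem g hx
  have hB := hA'.comp_left (hg.mono (Icc_subset_Icc le_rfl hmb)) hg'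
  set h : α → α := fun x => if x ≤ m then A x else (g ∘ invFunOn A (Icc a m)) x
  have hleft : EqOn h A (Icc a m) := fun x hx => if_pos hx.2
  have hright : EqOn h (g ∘ invFunOn A (Icc a m)) (Icc m b) :=
    (ite_le_eqOn_Ici ((hA.apply_right ham).trans (hB.apply_left hmb).symm)).mono Icc_subset_Ici_self
  refine ⟨h, hA.piecewise hB ham hmb hg hgm, fun x hx => ?_,
    (hleft ⟨ham, le_rfl⟩).trans (hA.apply_right ham)⟩
  have hinv := hA.bijOn.invOn_invFunOn
  rcases le_total x m with hxm | hmx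
  · have hx' : x ∈ Icc a m := ⟨hx.1, hxm⟩
    rw [hleft hx', hright (hA.bijOn.mapsTo hx'), comp_apply, hinv.1 hx']
  · have hx' : x ∈ Icc m b := ⟨hmx, hx.2⟩
    rw [hright hx', hleft (hB.bijOn.mapsTo hx'), comp_apply, hA.semiconj _ (hA'.bijOn.mapsTo hx'),
      hinv.2 hx']

end Assembly

theorem stmt_0_general (g : ℝ → ℝ) (k : ℕ) (φ : ℤ → ℝ)
    (hg_cont : ContinuousOn g (Set.Icc 0 π))
    (hg_mono : StrictMonoOn g (Set.Icc 0 π))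
    (hφ_mono : ∀ i j : ℤ, -(k : ℤ) ≤ i → i < j → j ≤ (k : ℤ) → φ i < φ j)
    (hφ_bot : φ (-(k : ℤ)) = 0) (hφ_top : φ (k : ℤ) = π)
    (hfix : ∀ x ∈ Set.Icc (0:ℝ) π,
      (g x = x ↔ ∃ i : ℤ, -(k : ℤ) ≤ i ∧ i ≤ (k : ℤ) ∧ x = φ i))
    (halt : ∀ i : ℤ, 0 ≤ i → i < (k : ℤ) →
       ((∀ x ∈ Set.Ioo (φ (-i - 1)) (φ (-i)), x < g x) ∧
           (∀ x ∈ Set.Ioo (φ i) (φ (i + 1)), g x < x)) ∨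
        ((∀ x ∈ Set.Ioo (φ (-i - 1)) (φ (-i)), g x < x) ∧
           (∀ x ∈ Set.Ioo (φ i) (φ (i + 1)), x < g x))) :
    ∃ h : ℝ → ℝ, ContinuousOn h (Set.Icc 0 π) ∧ StrictAntiOn h (Set.Icc 0 π) ∧
      h '' Set.Icc 0 π = Set.Icc 0 π ∧
      (∀ x ∈ Set.Icc (0:ℝ) π, h (h x) = g x) ∧
      h (φ 0) = φ 0 ∧
      (∀ x ∈ Set.Icc (0:ℝ) π, h x = x → x = φ 0) := by
  have hφ : MonotoneOn φ (Icc (-(k : ℤ)) k) := fun i hi j hj hij =>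
    hij.eq_or_lt.elim (fun h => h ▸ le_rfl) fun h => (hφ_mono i j hi.1 h hj.2).le
  have hφIcc : ∀ i : ℤ, -(k : ℤ) ≤ i → i ≤ k → φ i ∈ Icc 0 π := fun i h₁ h₂ =>
    ⟨hφ_bot ▸ hφ ⟨le_rfl, by omega⟩ ⟨h₁, h₂⟩ h₁, hφ_top ▸ hφ ⟨h₁, h₂⟩ ⟨by omega, le_rfl⟩ h₂⟩
  have hgφ : ∀ i : ℤ, -(k : ℤ) ≤ i → i ≤ k → g (φ i) = φ i := fun i h₁ h₂ =>
    (hfix _ (hφIcc i h₁ h₂)).2 ⟨i, h₁, h₂, rfl⟩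
  have hgIcc : ∀ i j : ℤ, -(k : ℤ) ≤ i → i ≤ j → j ≤ k →
      StrictMonoOn g (Icc (φ i) (φ j)) ∧ g '' Icc (φ i) (φ j) = Icc (φ i) (φ j) := by
    intro i j h₁ hij h₂
    have hsub := Icc_subset_Icc (hφIcc i h₁ (by omega)).1 (hφIcc j (by omega) h₂).2
    refine ⟨hg_mono.mono hsub, ?_⟩
    rw [(hg_cont.mono hsub).image_Icc_of_monotoneOn (hφ ⟨h₁, by omega⟩ ⟨by omega, h₂⟩ hij)
      (hg_mono.mono hsub).monotoneOn, hgφ i h₁ (by omega), hgφ j (by omega) h₂]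
  obtain ⟨A, hA⟩ := exists_isAntiConj_of_pieces hφ (hgIcc _ _ le_rfl (by omega) (by omega)).1
    (fun i _ _ => hgφ _ (by omega) (by omega)) fun i h₀ hi => by
      obtain ⟨hl, hl'⟩ := hgIcc (-i - 1) (-i) (by omega) (by omega) (by omega)
      obtain ⟨hr, hr'⟩ := hgIcc i (i + 1) (by omega) (by omega) (by omega)
      exact exists_isAntiConj (hφ_mono _ _ (by omega) (by omega) (by omega))
        (hφ_mono _ _ (by omega) (by omega) (by omega)) hl hl' hr hr' (halt i h₀ hi)
  have hA₀ := (hgIcc _ 0 le_rfl (by omega) (by omega)).2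
  rw [hφ_bot, hφ_top] at hA
  rw [hφ_bot] at hA₀
  have hφ₀ := hφIcc 0 (by omega) (by omega)
  obtain ⟨h, hh, hsq, hm⟩ :=
    exists_sqrt_of_isAntiConj hφ₀.1 hg_mono hA₀ (hgφ 0 (by omega) (by omega)) hA
  exact ⟨h, hh.strictAntiOn.continuousOn_of_image_Icc hh.image_eq, hh.strictAntiOn, hh.image_eq,
    hsq, hm, fun x hx hx' => hh.strictAntiOn.eq_of_apply_eq_self hφ₀ hm hx hx'⟩

/-- If `g` is an orientation-preserving homeomorphism of `[0,π]` whose fixed-point set is the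
finite set `φ_{-k} = 0 < … < φ_0 < … < φ_k = π`, and for each `0 ≤ i < k` the points of the
two intervals `(φ_{-i-1}, φ_{-i})` and `(φ_i, φ_{i+1})` move under `g` either both toward
`φ_0` or both away from `φ_0`, then there is an orientation-reversing homeomorphism `h` of
`[0,π]` with `g = h ∘ h`, whose unique fixed point is `φ_0`. -/
theorem stmt_0 (g : ℝ → ℝ) (k : ℕ) (φ : ℤ → ℝ)
    (hg_cont : ContinuousOn g (Set.Icc 0 π))
    (hg_mono : StrictMonoOn g (Set.Icc 0 π))
    (hg_surj : g '' Set.Icc 0 π = Set.Icc 0 π)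
    (hφ_mono : ∀ i j : ℤ, -(k : ℤ) ≤ i → i < j → j ≤ (k : ℤ) → φ i < φ j)
    (hφ_bot : φ (-(k : ℤ)) = 0) (hφ_top : φ (k : ℤ) = π)
    (hfix : ∀ x ∈ Set.Icc (0:ℝ) π,
      (g x = x ↔ ∃ i : ℤ, -(k : ℤ) ≤ i ∧ i ≤ (k : ℤ) ∧ x = φ i))
    (halt : ∀ i : ℤ, 0 ≤ i → i < (k : ℤ) →
       ((∀ x ∈ Set.Ioo (φ (-i - 1)) (φ (-i)), x < g x) ∧
           (∀ x ∈ Set.Ioo (φ i) (φ (i + 1)), g x < x)) ∨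
        ((∀ x ∈ Set.Ioo (φ (-i - 1)) (φ (-i)), g x < x) ∧
           (∀ x ∈ Set.Ioo (φ i) (φ (i + 1)), x < g x))) :
    ∃ h : ℝ → ℝ, ContinuousOn h (Set.Icc 0 π) ∧ StrictAntiOn h (Set.Icc 0 π) ∧
      h '' Set.Icc 0 π = Set.Icc 0 π ∧
      (∀ x ∈ Set.Icc (0:ℝ) π, h (h x) = g x) ∧
      h (φ 0) = φ 0 ∧
      (∀ x ∈ Set.Icc (0:ℝ) π, h x = x → x = φ 0) :=
  stmt_0_general g k φ hg_cont hg_mono hφ_mono hφ_bot hφ_top hfix halt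
end

section
/- Let f : [0,π] → [0,π] be continuously differentiable with f(0) = 0, f(π) = π, and f'(φ) > 0 for all φ ∈ [0,π], and suppose f is not the identity map (equivalently, f' is not identically equal to 1). Then the double integral ∫₀^π ∫₀^{2π} log[1 − (1 − f'(φ)²)·sin²(β − φ)] dβ dφ is strictly negative. (Note that the hypotheses imply ∫₀^π f'(φ) dφ = π, and that the argument of the logarithm is strictly positive for all β, φ.) -/
/-!
For `a > 0` and `r = (1 - a) / (1 + a) ∈ (-1, 1)` one has
`1 - (1 - a²) sin² θ = ((1 + a) / 2)² |e^{2iθ} + r|²`, and `log |z + r|` has mean zero on the unit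
circle, so the inner integral equals `4π log ((1 + f' φ) / 2)`. As `log ((1 + x) / 2) ≤ (x - 1) / 2`
with equality only at `x = 1`, and `∫₀^π (f' - 1) = f π - f 0 - π = 0`, the outer integral is
negative unless `f' ≡ 1`, i.e. unless `f = id`.
-/

open Real MeasureTheory

theorem integral_log_norm_circleMap_add {r : ℝ} (hr : |r| < 1) :
    ∫ θ in (0:ℝ)..2 * π, log ‖circleMap 0 1 θ + r‖ = 0 := by
  have h := circleAverage_log_norm_sub_const₀ (a := -(r : ℂ)) (by simpa using hr)
  simpa [circleAverage_def, pi_ne_zero] using h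

theorem norm_circleMap_add_sq (r θ : ℝ) :
    ‖circleMap 0 1 θ + r‖ ^ 2 = 1 + 2 * r * cos θ + r ^ 2 := by
  rw [Complex.sq_norm, Complex.normSq_apply]
  simp only [circleMap, Complex.ofReal_one, one_mul, zero_add, Complex.add_re, Complex.exp_re,
    Complex.mul_re, Complex.ofReal_re, Complex.I_re, mul_zero, Complex.ofReal_im, Complex.I_im,
    mul_one, sub_self, exp_zero, Complex.mul_im, add_zero, Complex.add_im, Complex.exp_im]
  nlinarith [sin_sq_add_cos_sq θ]

theorem one_sub_mul_sin_sq_eq {a : ℝ} (ha : 0 < a) (θ : ℝ) :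
    1 - (1 - a ^ 2) * sin θ ^ 2
      = ((1 + a) / 2 * ‖circleMap 0 1 (2 * θ) + ((1 - a) / (1 + a) : ℝ)‖) ^ 2 := by
  rw [mul_pow, norm_circleMap_add_sq, cos_two_mul, cos_sq']
  field_simp
  ring

theorem Function.Periodic.intervalIntegral_comp_int_mul {g : ℝ → ℝ} {T : ℝ}
    (hg : Function.Periodic g T) (hgi : ∀ t₁ t₂, IntervalIntegrable g volume t₁ t₂)
    {n : ℤ} (hn : n ≠ 0) :
    ∫ x in (0:ℝ)..T, g (n * x) = ∫ x in (0:ℝ)..T, g x := by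
  have hn' : (n : ℝ) ≠ 0 := Int.cast_ne_zero.mpr hn
  rw [intervalIntegral.integral_comp_mul_left _ hn', mul_zero, ← zsmul_eq_mul, ← zero_add (n • T),
    hg.intervalIntegral_add_zsmul_eq n 0 hgi, zsmul_eq_mul, smul_eq_mul, inv_mul_cancel_left₀ hn',
    zero_add]

theorem Function.Periodic.intervalIntegral_comp_sub_right {g : ℝ → ℝ} {T : ℝ}
    (hg : Function.Periodic g T) (s : ℝ) :
    ∫ x in (0:ℝ)..T, g (x - s) = ∫ x in (0:ℝ)..T, g x := by
  rw [intervalIntegral.integral_comp_sub_right, zero_sub, ← neg_add_eq_sub,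
    hg.intervalIntegral_add_eq (-s) 0, zero_add]

theorem integral_log_one_sub_mul_sin_sq {a : ℝ} (ha : 0 < a) :
    ∫ θ in (0:ℝ)..2 * π, log (1 - (1 - a ^ 2) * sin θ ^ 2) = 4 * π * log ((1 + a) / 2) := by
  set r : ℝ := (1 - a) / (1 + a)
  have hr : |r| < 1 := by
    rw [abs_div, abs_of_pos (by linarith : 0 < 1 + a), div_lt_one (by linarith), abs_lt]
    constructor <;> linarith
  have hne : ∀ u, circleMap 0 1 u + r ≠ 0 := fun u h => by
    have := congrArg norm (eq_neg_of_add_eq_zero_left h)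
    simp only [norm_circleMap_zero, abs_one, norm_neg, Complex.norm_real, Real.norm_eq_abs] at this
    linarith
  set g : ℝ → ℝ := fun u => log ‖circleMap 0 1 u + r‖
  have hg : Continuous g := (by fun_prop : Continuous fun u => ‖circleMap 0 1 u + r‖).log
    fun u => norm_ne_zero_iff.mpr (hne u)
  have hsplit : ∀ θ,
      log (1 - (1 - a ^ 2) * sin θ ^ 2) = 2 * log ((1 + a) / 2) + 2 * g (2 * θ) := by
    intro θ
    rw [one_sub_mul_sin_sq_eq ha, log_pow, log_mul (by positivity) (norm_ne_zero_iff.mpr (hne _))]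
    push_cast
    ring
  have hdouble : ∫ θ in (0:ℝ)..2 * π, g (2 * θ) = 0 := by
    refine Eq.trans ?_ (integral_log_norm_circleMap_add hr)
    have hper := (periodic_circleMap 0 1).comp fun z => log ‖z + r‖
    exact_mod_cast hper.intervalIntegral_comp_int_mul (fun _ _ => hg.intervalIntegrable _ _)
      (n := 2) two_ne_zero
  have hgi : IntervalIntegrable (fun θ => 2 * g (2 * θ)) volume 0 (2 * π) :=
    ((hg.comp (continuous_const_mul 2)).intervalIntegrable _ _).const_mul 2
  simp_rw [hsplit]
  rw [intervalIntegral.integral_add intervalIntegrable_const hgi,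
    intervalIntegral.integral_const_mul 2 (fun θ => g (2 * θ)), hdouble,
    intervalIntegral.integral_const, smul_eq_mul]
  ring

theorem integral_log_one_sub_mul_sin_sub_sq {a : ℝ} (ha : 0 < a) (φ : ℝ) :
    ∫ β in (0:ℝ)..2 * π, log (1 - (1 - a ^ 2) * sin (β - φ) ^ 2)
      = 4 * π * log ((1 + a) / 2) := by
  have h := sin_periodic.comp fun s => log (1 - (1 - a ^ 2) * s ^ 2)
  exact (h.intervalIntegral_comp_sub_right φ).trans (integral_log_one_sub_mul_sin_sq ha)

theorem integral_log_lt_integral_sub_one {g : ℝ → ℝ} {a b : ℝ} (hab : a < b)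
    (hg : ContinuousOn g (Set.Icc a b)) (hpos : ∀ x ∈ Set.Icc a b, 0 < g x)
    (hne : ∃ c ∈ Set.Icc a b, g c ≠ 1) :
    ∫ x in a..b, log (g x) < ∫ x in a..b, (g x - 1) := by
  obtain ⟨c, hc, hc1⟩ := hne
  exact intervalIntegral.integral_lt_integral_of_continuousOn_of_le_of_exists_lt hab
    (hg.log fun x hx => (hpos x hx).ne') (hg.sub continuousOn_const)
    (fun x hx => log_le_sub_one_of_pos (hpos x (Set.Ioc_subset_Icc_self hx)))
    ⟨c, hc, log_lt_sub_one_of_pos (hpos c hc) hc1⟩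

theorem intervalIntegral.integral_eq_sub_of_hasDerivWithinAt_Icc {E : Type*}
    [NormedAddCommGroup E] [NormedSpace ℝ E] [CompleteSpace E] {f f' : ℝ → E} {a b : ℝ}
    (hab : a ≤ b) (hderiv : ∀ x ∈ Set.Icc a b, HasDerivWithinAt f (f' x) (Set.Icc a b) x)
    (hint : IntervalIntegrable f' volume a b) :
    ∫ x in a..b, f' x = f b - f a :=
  integral_eq_sub_of_hasDerivAt_of_le hab (fun x hx => (hderiv x hx).continuousWithinAt)
    (fun x hx => (hderiv x (Set.Ioo_subset_Icc_self hx)).hasDerivAt (Icc_mem_nhds hx.1 hx.2)) hint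

theorem eqOn_id_of_hasDerivWithinAt_one {f : ℝ → ℝ} {a b : ℝ}
    (hderiv : ∀ x ∈ Set.Icc a b, HasDerivWithinAt f 1 (Set.Icc a b) x) (ha : f a = a) :
    Set.EqOn f id (Set.Icc a b) :=
  eq_of_has_deriv_right_eq
    (fun x hx => (hderiv x (Set.Ico_subset_Icc_self hx)).mono_of_mem_nhdsWithin
      (Icc_mem_nhdsGE_of_mem hx))
    (fun x _ => hasDerivWithinAt_id x _)
    (fun x hx => (hderiv x hx).continuousWithinAt) continuousOn_id ha

/-- If `f : [0,π] → [0,π]` is C¹ with `f(0) = 0`, `f(π) = π`, `f' > 0`, and `f` is not the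
identity, then `∫₀^π ∫₀^{2π} log(1 − (1 − f'(φ)²)·sin²(β − φ)) dβ dφ < 0`. -/
theorem stmt_1 (f f' : ℝ → ℝ)
    (hderiv : ∀ x ∈ Set.Icc (0:ℝ) π, HasDerivWithinAt f (f' x) (Set.Icc 0 π) x)
    (hf'cont : ContinuousOn f' (Set.Icc 0 π))
    (hf0 : f 0 = 0) (hfpi : f π = π)
    (hf'pos : ∀ x ∈ Set.Icc (0:ℝ) π, 0 < f' x)
    (hne : ∃ x ∈ Set.Icc (0:ℝ) π, f x ≠ x) :
    (∫ φ in (0:ℝ)..π, ∫ β in (0:ℝ)..(2 * π),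
      Real.log (1 - (1 - f' φ ^ 2) * Real.sin (β - φ) ^ 2)) < 0 := by
  have hf'int : IntervalIntegrable f' volume 0 π := hf'cont.intervalIntegrable_of_Icc pi_pos.le
  have hmean : ∫ x in (0:ℝ)..π, f' x = π := by
    rw [intervalIntegral.integral_eq_sub_of_hasDerivWithinAt_Icc pi_pos.le hderiv hf'int, hfpi, hf0,
      sub_zero]
  obtain ⟨c, hc, hc1⟩ : ∃ c ∈ Set.Icc 0 π, f' c ≠ 1 := by
    by_contra! h
    obtain ⟨x, hx, hfx⟩ := hne
    exact hfx (eqOn_id_of_hasDerivWithinAt_one (fun y hy => h y hy ▸ hderiv y hy) hf0 hx)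
  have hlt := integral_log_lt_integral_sub_one (g := fun x => (1 + f' x) / 2) pi_pos
    ((continuousOn_const.add hf'cont).div_const 2) (fun x hx => by have := hf'pos x hx; positivity)
    ⟨c, hc, fun h => hc1 (by linarith)⟩
  have hzero : ∫ x in (0:ℝ)..π, ((1 + f' x) / 2 - 1) = 0 := by
    simp only [show ∀ x, (1 + f' x) / 2 - 1 = (f' x - 1) / 2 from fun x => by ring]
    rw [intervalIntegral.integral_div,
      intervalIntegral.integral_sub hf'int intervalIntegrable_const, hmean, intervalIntegral.integral_const, smul_eq_mul]
    ring
  rw [intervalIntegral.integral_congr fun φ hφ => integral_log_one_sub_mul_sin_sub_sq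
    (hf'pos φ (Set.uIcc_of_le pi_pos.le ▸ hφ)) φ, intervalIntegral.integral_const_mul]
  exact mul_neg_of_pos_of_neg (by positivity) (hlt.trans_eq hzero)
end

section
/- For every real number a > 0 and every real number φ, the integral over one full period satisfies ∫₀^{2π} log[1 − (1 − a²)·sin²(β − φ)] dβ = 4π · log((1 + a)/2). -/
/-!
With `r = (a - 1) / (a + 1)`, which satisfies `|r| < 1`, the double-angle formula gives
`1 - (1 - a²) sin² β = ((1 + a) / 2)² (1 - 2 r cos 2β + r²)`.
The classical integral `∫₀^{2π} log (1 - 2 r cos θ + r²) dθ = 2 ∫₀^{2π} log |e^{iθ} - r| dθ`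
vanishes for `|r| < 1` by the mean value property of the harmonic function `log |1 - r z|`.
Periodicity removes the phase `φ` and the doubled angle.
-/

open Real MeasureTheory

section Periodic

variable {E : Type*} [NormedAddCommGroup E] [NormedSpace ℝ E] {f : ℝ → E} {T : ℝ}

theorem Function.Periodic.intervalIntegral_comp_sub_eq (hf : Function.Periodic f T) (c : ℝ) :
    ∫ x in 0..T, f (x - c) = ∫ x in 0..T, f x := by
  simpa [intervalIntegral.integral_comp_sub_right, sub_eq_neg_add] using
    hf.intervalIntegral_add_eq (-c) 0

theorem Function.Periodic.intervalIntegral_comp_nat_mul_eq (hf : Function.Periodic f T)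
    (h_int : ∀ t₁ t₂, IntervalIntegrable f volume t₁ t₂) {n : ℕ} (hn : n ≠ 0) :
    ∫ x in 0..T, f (n * x) = ∫ x in 0..T, f x := by
  have hn' : (n : ℝ) ≠ 0 := Nat.cast_ne_zero.mpr hn
  have h_periods := hf.intervalIntegral_add_zsmul_eq n 0 h_int
  simp only [zero_add, natCast_zsmul] at h_periods
  rw [intervalIntegral.integral_comp_mul_left _ hn', mul_zero, ← nsmul_eq_mul, h_periods,
    ← Nat.cast_smul_eq_nsmul ℝ, inv_smul_smul₀ hn']

end Periodic

theorem norm_circleMap_zero_one_sub_ofReal_sq (r θ : ℝ) :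
    ‖circleMap 0 1 θ - r‖ ^ 2 = 1 - 2 * r * cos θ + r ^ 2 := by
  rw [← Complex.normSq_eq_norm_sq, Complex.normSq_apply]
  simp [circleMap, Complex.exp_ofReal_mul_I_re, Complex.exp_ofReal_mul_I_im]
  nlinarith [sin_sq_add_cos_sq θ]

theorem one_sub_two_mul_mul_cos_add_sq_pos {r : ℝ} (hr : |r| < 1) (θ : ℝ) :
    0 < 1 - 2 * r * cos θ + r ^ 2 := by
  have hcos : r * cos θ ≤ |r| := (le_abs_self _).trans <| by
    rw [abs_mul]; exact mul_le_of_le_one_right (abs_nonneg r) (abs_cos_le_one θ)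
  nlinarith [sq_abs r, mul_pos (sub_pos.mpr hr) (sub_pos.mpr hr)]

theorem continuous_log_one_sub_two_mul_mul_cos_add_sq {r : ℝ} (hr : |r| < 1) :
    Continuous fun θ ↦ log (1 - 2 * r * cos θ + r ^ 2) :=
  (by fun_prop : Continuous fun θ ↦ 1 - 2 * r * cos θ + r ^ 2).log
    fun θ ↦ (one_sub_two_mul_mul_cos_add_sq_pos hr θ).ne'

theorem integral_log_norm_circleMap_sub_eq_zero {a : ℂ} (ha : ‖a‖ < 1) :
    ∫ θ in 0..2 * π, log ‖circleMap 0 1 θ - a‖ = 0 := by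
  have h_avg := circleAverage_log_norm_sub_const₀ ha
  rw [circleAverage_def] at h_avg
  exact (smul_eq_zero.mp h_avg).resolve_left (by positivity)

theorem integral_log_one_sub_two_mul_mul_cos_add_sq {r : ℝ} (hr : |r| < 1) :
    ∫ θ in 0..2 * π, log (1 - 2 * r * cos θ + r ^ 2) = 0 := by
  simp_rw [← norm_circleMap_zero_one_sub_ofReal_sq, Real.log_pow,
    intervalIntegral.integral_const_mul]
  rw [integral_log_norm_circleMap_sub_eq_zero (by simpa using hr), mul_zero]

theorem integral_log_one_sub_two_mul_mul_cos_nat_mul_add_sq {r : ℝ} (hr : |r| < 1) {n : ℕ}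
    (hn : n ≠ 0) : ∫ θ in 0..2 * π, log (1 - 2 * r * cos (n * θ) + r ^ 2) = 0 := by
  have hper : Function.Periodic (fun θ ↦ log (1 - 2 * r * cos θ + r ^ 2)) (2 * π) := fun θ ↦ by
    simp only [cos_add_two_pi]
  rw [hper.intervalIntegral_comp_nat_mul_eq
    (continuous_log_one_sub_two_mul_mul_cos_add_sq hr).intervalIntegrable hn,
    integral_log_one_sub_two_mul_mul_cos_add_sq hr]

/-- For every real `a > 0` and every real `φ`,
`∫₀^{2π} log(1 − (1 − a²)·sin²(β − φ)) dβ = 4π · log((1 + a)/2)`. -/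
theorem stmt_2 (a : ℝ) (ha : 0 < a) (φ : ℝ) :
    ∫ β in (0:ℝ)..(2 * π), Real.log (1 - (1 - a ^ 2) * Real.sin (β - φ) ^ 2)
      = 4 * π * Real.log ((1 + a) / 2) := by
  set r := (a - 1) / (a + 1) with hr_def
  have hr : |r| < 1 := by
    rw [hr_def, abs_lt, lt_div_iff₀ (by linarith), div_lt_iff₀ (by linarith)]
    constructor <;> linarith
  have hper : Function.Periodic (fun β ↦ log (1 - (1 - a ^ 2) * sin β ^ 2)) (2 * π) := fun β ↦ by
    simp only [sin_add_two_pi]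
  have hsplit : ∀ β, log (1 - (1 - a ^ 2) * sin β ^ 2)
      = 2 * log ((1 + a) / 2) + log (1 - 2 * r * cos ((2 : ℕ) * β) + r ^ 2) := fun β ↦ by
    have hfactor : 1 - (1 - a ^ 2) * sin β ^ 2
        = ((1 + a) / 2) ^ 2 * (1 - 2 * r * cos ((2 : ℕ) * β) + r ^ 2) := by
      rw [hr_def, Nat.cast_ofNat, cos_two_mul, cos_sq']
      field_simp
      ring
    rw [hfactor, log_mul (by positivity) (one_sub_two_mul_mul_cos_add_sq_pos hr _).ne', log_pow]
    norm_num
  have hint : IntervalIntegrable (fun β ↦ log (1 - 2 * r * cos ((2 : ℕ) * β) + r ^ 2)) volume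
      0 (2 * π) :=
    ((continuous_log_one_sub_two_mul_mul_cos_add_sq hr).comp (by fun_prop)).intervalIntegrable _ _
  rw [hper.intervalIntegral_comp_sub_eq φ, intervalIntegral.integral_congr fun β _ ↦ hsplit β,
    intervalIntegral.integral_add intervalIntegrable_const hint,
    integral_log_one_sub_two_mul_mul_cos_nat_mul_add_sq hr two_ne_zero,
    intervalIntegral.integral_const]
  simp only [sub_zero, smul_eq_mul, add_zero]
  ring
end

section
/- Let w : [0,π] → ℝ be continuously differentiable with w(0) = w(π) = 0, |w'(s)| < 1 for all s ∈ [0,π], and w not identically zero. For t ∈ [0,1] define F(t) = ∫₀^π log( sin(s + t·w(s)) / sin(s − t·w(s)) ) · w'(s) ds. Then F(0) = 0 and F is strictly increasing on [0,1]; in particular F(t) > 0 for every t ∈ (0,1]. -/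
/-!
The substitution `u = s + t w(s)`, an increasing C¹ bijection of `[0, π]` because `|t w'| < 1`,
gives `∫₀^π log sin (s + t w s) · (1 + t w' s) ds = ∫₀^π log sin u du`. Subtracting this
identity at `-t` from the one at `t` yields `t F(t) = ∫₀^π D(t, s) ds` with
`D(t, s) = 2 log sin s - log sin (s + t w s) - log sin (s - t w s)`.
For fixed `s`, `τ ↦ log sin (s + τ w s) + log sin (s - τ w s)` is even, and strictly concave
when `w s ≠ 0` because `log ∘ sin` is strictly concave on `(0, π)`; hence its secant slope
`D(t, s) / t` from `τ = 0` is positive and strictly increasing in `t`. Since `w ≠ 0` on a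
nonempty open set, integrating in `s` makes `F(t) = ∫₀^π D(t, s) / t ds` strictly increasing.
-/

open Real MeasureTheory Set

lemma strictConcaveOn_log_sin : StrictConcaveOn ℝ (Ioo 0 π) (fun x => log (sin x)) := by
  refine ⟨convex_Ioo 0 π, fun x hx y hy hxy a b ha hb hab => ?_⟩
  have hsx : 0 < sin x := sin_pos_of_pos_of_lt_pi hx.1 hx.2
  have hsy : 0 < sin y := sin_pos_of_pos_of_lt_pi hy.1 hy.2
  calc a • log (sin x) + b • log (sin y) ≤ log (a • sin x + b • sin y) :=
        strictConcaveOn_log_Ioi.concaveOn.2 hsx hsy ha.le hb.le hab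
    _ < log (sin (a • x + b • y)) := by
        refine log_lt_log (by simp only [smul_eq_mul]; positivity) ?_
        exact strictConcaveOn_sin_Icc.2 (Ioo_subset_Icc_self hx) (Ioo_subset_Icc_self hy)
          hxy ha hb hab

lemma StrictConcaveOn.comp_add_mul {g : ℝ → ℝ} {S T : Set ℝ} (hg : StrictConcaveOn ℝ S g)
    (hT : Convex ℝ T) {x d : ℝ} (hd : d ≠ 0) (hTS : ∀ τ ∈ T, x + τ * d ∈ S) :
    StrictConcaveOn ℝ T (fun τ => g (x + τ * d)) := by
  refine ⟨hT, fun τ₁ h₁ τ₂ h₂ h12 a b ha hb hab => ?_⟩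
  have h := hg.2 (hTS τ₁ h₁) (hTS τ₂ h₂) (by simpa [hd] using h12) ha hb hab
  simp only [smul_eq_mul] at h ⊢
  convert h using 2
  linear_combination (-x) * hab

-- At `τ = 0` the quotient is `0` by the convention `x / 0 = 0`.
lemma StrictConcaveOn.strictMonoOn_div_of_even {ψ : ℝ → ℝ} {r : ℝ}
    (hψ : StrictConcaveOn ℝ (Icc (-r) r) ψ) (heven : ∀ τ, ψ (-τ) = ψ τ) :
    StrictMonoOn (fun τ => (ψ 0 - ψ τ) / τ) (Icc 0 r) := by
  intro τ₁ h₁ τ₂ h₂ h12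
  have hτ₂ : 0 < τ₂ := h₁.1.trans_lt h12
  have mem : ∀ τ ∈ Icc 0 r, τ ∈ Icc (-r) r := fun τ hτ =>
    ⟨by linarith [hτ.1, hτ.2], hτ.2⟩
  have h0 : (0 : ℝ) ∈ Icc (-r) r := mem 0 ⟨le_rfl, h₁.1.trans h₁.2⟩
  have hneg : -τ₂ ∈ Icc (-r) r := ⟨neg_le_neg h₂.2, by linarith [h₂.2]⟩
  simp only [← neg_sub (ψ τ₁), ← neg_sub (ψ τ₂), neg_div, neg_lt_neg_iff]
  rcases h₁.1.eq_or_lt with rfl | hτ₁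
  · -- the secant through `0` is steeper towards `-τ₂` than towards `τ₂`, and `ψ` is even
    have h := hψ.secant_strict_mono h0 hneg (mem τ₂ h₂) (by linarith) hτ₂.ne' (by linarith)
    rw [heven, sub_zero, sub_zero, div_neg] at h
    rw [sub_self, div_zero]
    linarith
  · simpa using
      hψ.secant_strict_mono h0 (mem τ₁ h₁) (mem τ₂ h₂) hτ₁.ne' hτ₂.ne' h12

lemma StrictConcaveOn.strictMonoOn_symmetric_secant {g : ℝ → ℝ} {S : Set ℝ}
    (hg : StrictConcaveOn ℝ S g) {x d r : ℝ} (hd : d ≠ 0)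
    (hS : ∀ τ ∈ Icc (-r) r, x + τ * d ∈ S) :
    StrictMonoOn (fun τ => (2 * g x - g (x + τ * d) - g (x - τ * d)) / τ) (Icc 0 r) := by
  have hS' : ∀ τ ∈ Icc (-r) r, x + τ * -d ∈ S := fun τ hτ => by
    simpa [mul_neg, neg_mul] using hS (-τ) ⟨neg_le_neg hτ.2, by linarith [hτ.1]⟩
  have hψ := (hg.comp_add_mul (convex_Icc _ _) hd hS).add
    (hg.comp_add_mul (convex_Icc _ _) (neg_ne_zero.2 hd) hS')
  convert hψ.strictMonoOn_div_of_even (fun τ => by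
    simp only [Pi.add_apply, neg_mul_neg, neg_mul_comm τ d, add_comm]) using 2 with τ
  simp only [Pi.add_apply, zero_mul, add_zero, mul_neg, ← sub_eq_add_neg, sub_zero]
  ring

noncomputable def logSinDefect (w : ℝ → ℝ) (t s : ℝ) : ℝ :=
  2 * log (sin s) - log (sin (s + t * w s)) - log (sin (s - t * w s))

section

variable {w w' : ℝ → ℝ} {t : ℝ}

lemma one_add_mul_pos (hw'lt : ∀ s ∈ Icc (0:ℝ) π, |w' s| < 1) (ht : |t| ≤ 1) {s : ℝ}
    (hs : s ∈ Icc 0 π) : 0 < 1 + t * w' s := by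
  have h : |t * w' s| < 1 := by
    rw [abs_mul]
    exact (mul_le_of_le_one_left (abs_nonneg _) ht).trans_lt (hw'lt s hs)
  linarith [neg_abs_le (t * w' s)]

lemma hasDerivAt_add_mul (hderiv : ∀ s ∈ Icc (0:ℝ) π, HasDerivWithinAt w (w' s) (Icc 0 π) s)
    {s : ℝ} (hs : s ∈ Ioo 0 π) :
    HasDerivAt (fun s => s + t * w s) (1 + t * w' s) s :=
  (hasDerivAt_id s).add (((hderiv s (Ioo_subset_Icc_self hs)).hasDerivAt
    (Icc_mem_nhds hs.1 hs.2)).const_mul t)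

lemma continuousOn_add_mul
    (hderiv : ∀ s ∈ Icc (0:ℝ) π, HasDerivWithinAt w (w' s) (Icc 0 π) s) :
    ContinuousOn (fun s => s + t * w s) (Icc 0 π) :=
  continuousOn_id.add (continuousOn_const.mul fun s hs => (hderiv s hs).continuousWithinAt)

lemma add_mul_mem_Ioo (hderiv : ∀ s ∈ Icc (0:ℝ) π, HasDerivWithinAt w (w' s) (Icc 0 π) s)
    (hw0 : w 0 = 0) (hwpi : w π = 0) (hw'lt : ∀ s ∈ Icc (0:ℝ) π, |w' s| < 1)
    (ht : |t| ≤ 1) {s : ℝ} (hs : s ∈ Ioo 0 π) : s + t * w s ∈ Ioo 0 π := by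
  have hmono : StrictMonoOn (fun s => s + t * w s) (Icc 0 π) := by
    refine strictMonoOn_of_hasDerivWithinAt_pos (f' := fun s => 1 + t * w' s) (convex_Icc 0 π)
      (continuousOn_add_mul hderiv) ?_ ?_ <;> rw [interior_Icc]
    · exact fun x hx => (hasDerivAt_add_mul hderiv hx).hasDerivWithinAt
    · exact fun x hx => one_add_mul_pos hw'lt ht (Ioo_subset_Icc_self hx)
  have h0 := hmono (left_mem_Icc.2 pi_pos.le) (Ioo_subset_Icc_self hs) hs.1
  have hπ := hmono (Ioo_subset_Icc_self hs) (right_mem_Icc.2 pi_pos.le) hs.2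
  simp only [hw0, hwpi, mul_zero, add_zero] at h0 hπ
  exact ⟨h0, hπ⟩

lemma log_sin_add_mul_div_sin_sub_mul
    (hderiv : ∀ s ∈ Icc (0:ℝ) π, HasDerivWithinAt w (w' s) (Icc 0 π) s)
    (hw0 : w 0 = 0) (hwpi : w π = 0) (hw'lt : ∀ s ∈ Icc (0:ℝ) π, |w' s| < 1)
    (ht : |t| ≤ 1) {s : ℝ} (hs : s ∈ Icc 0 π) :
    log (sin (s + t * w s) / sin (s - t * w s)) =
      log (sin (s + t * w s)) - log (sin (s - t * w s)) := by
  rcases eq_or_ne (w s) 0 with hws | hws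
  · rcases eq_or_ne (sin s) 0 with hsin | hsin <;> simp [hws, hsin]
  have hs' : s ∈ Ioo 0 π := ⟨hs.1.lt_of_ne (by rintro rfl; exact hws hw0),
    hs.2.lt_of_ne (by rintro rfl; exact hws hwpi)⟩
  have hpos : ∀ τ : ℝ, |τ| ≤ 1 → 0 < sin (s + τ * w s) := fun τ hτ =>
    have h := add_mul_mem_Ioo hderiv hw0 hwpi hw'lt hτ hs'
    sin_pos_of_pos_of_lt_pi h.1 h.2
  have hneg := hpos (-t) (by rwa [abs_neg])
  rw [neg_mul, ← sub_eq_add_neg] at hneg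
  exact log_div (hpos t ht).ne' hneg.ne'

lemma integrableOn_one_add_mul_mul_log_sin_add_mul
    (hderiv : ∀ s ∈ Icc (0:ℝ) π, HasDerivWithinAt w (w' s) (Icc 0 π) s)
    (hw0 : w 0 = 0) (hwpi : w π = 0) (hw'lt : ∀ s ∈ Icc (0:ℝ) π, |w' s| < 1)
    (ht : |t| ≤ 1) :
    IntegrableOn (fun s => (1 + t * w' s) * log (sin (s + t * w s))) (Icc 0 π) := by
  have h := (integrableOn_Icc_deriv_smul_iff_of_deriv_nonneg (continuousOn_add_mul hderiv)
    (fun s hs => hasDerivAt_add_mul hderiv hs)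
    (fun s hs => (one_add_mul_pos hw'lt ht (Ioo_subset_Icc_self hs)).le) pi_pos.le
    (g := fun u => log (sin u))).2
  simp only [hw0, hwpi, mul_zero, add_zero, smul_eq_mul] at h
  exact h ((intervalIntegrable_iff_integrableOn_Icc_of_le pi_pos.le).1 intervalIntegrable_log_sin)

lemma setIntegral_one_add_mul_mul_log_sin_add_mul
    (hderiv : ∀ s ∈ Icc (0:ℝ) π, HasDerivWithinAt w (w' s) (Icc 0 π) s)
    (hw0 : w 0 = 0) (hwpi : w π = 0) (hw'lt : ∀ s ∈ Icc (0:ℝ) π, |w' s| < 1)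
    (ht : |t| ≤ 1) :
    ∫ s in Icc 0 π, (1 + t * w' s) * log (sin (s + t * w s)) =
      ∫ u in Icc 0 π, log (sin u) := by
  have h := integral_Icc_deriv_smul_of_deriv_nonneg (continuousOn_add_mul hderiv)
    (fun s hs => hasDerivAt_add_mul hderiv hs)
    (fun s hs => (one_add_mul_pos hw'lt ht (Ioo_subset_Icc_self hs)).le) pi_pos.le
    (g := fun u => log (sin u))
  simpa only [hw0, hwpi, mul_zero, add_zero, smul_eq_mul] using h

lemma intervalIntegrable_log_sin_add_mul_mul
    (hderiv : ∀ s ∈ Icc (0:ℝ) π, HasDerivWithinAt w (w' s) (Icc 0 π) s)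
    (hw'cont : ContinuousOn w' (Icc 0 π)) (hw0 : w 0 = 0) (hwpi : w π = 0)
    (hw'lt : ∀ s ∈ Icc (0:ℝ) π, |w' s| < 1) (ht : |t| ≤ 1) {ρ : ℝ → ℝ}
    (hρ : ContinuousOn ρ (Icc 0 π)) :
    IntervalIntegrable (fun s => log (sin (s + t * w s)) * ρ s) volume 0 π := by
  have hpos : ∀ s ∈ Icc 0 π, 0 < 1 + t * w' s := fun s hs => one_add_mul_pos hw'lt ht hs
  have hquot : ContinuousOn (fun s => ρ s / (1 + t * w' s)) (Icc 0 π) :=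
    hρ.div (continuousOn_const.add (continuousOn_const.mul hw'cont)) fun s hs => (hpos s hs).ne'
  refine (intervalIntegrable_iff_integrableOn_Icc_of_le pi_pos.le).2 ?_
  refine ((integrableOn_one_add_mul_mul_log_sin_add_mul hderiv hw0 hwpi hw'lt ht).continuousOn_mul
    hquot isCompact_Icc).congr_fun (fun s hs => ?_) measurableSet_Icc
  field_simp [(hpos s hs).ne']

lemma integral_log_sin_add_mul_add_mul_integral
    (hderiv : ∀ s ∈ Icc (0:ℝ) π, HasDerivWithinAt w (w' s) (Icc 0 π) s)
    (hw'cont : ContinuousOn w' (Icc 0 π)) (hw0 : w 0 = 0) (hwpi : w π = 0)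
    (hw'lt : ∀ s ∈ Icc (0:ℝ) π, |w' s| < 1) (ht : |t| ≤ 1) :
    (∫ s in (0:ℝ)..π, log (sin (s + t * w s))) +
      t * ∫ s in (0:ℝ)..π, log (sin (s + t * w s)) * w' s =
        ∫ s in (0:ℝ)..π, log (sin s) := by
  have hL := intervalIntegrable_log_sin_add_mul_mul hderiv hw'cont hw0 hwpi hw'lt ht
    (continuousOn_const (c := (1:ℝ)))
  have hLw := intervalIntegrable_log_sin_add_mul_mul hderiv hw'cont hw0 hwpi hw'lt ht hw'cont
  simp only [mul_one] at hL
  rw [← intervalIntegral.integral_const_mul,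
    ← intervalIntegral.integral_add hL (hLw.const_mul t),
    intervalIntegral.integral_of_le pi_pos.le, intervalIntegral.integral_of_le pi_pos.le,
    ← integral_Icc_eq_integral_Ioc, ← integral_Icc_eq_integral_Ioc,
    ← setIntegral_one_add_mul_mul_log_sin_add_mul hderiv hw0 hwpi hw'lt ht]
  congr 1 with s
  ring

lemma mul_integral_log_sin_div_mul_eq_integral_logSinDefect
    (hderiv : ∀ s ∈ Icc (0:ℝ) π, HasDerivWithinAt w (w' s) (Icc 0 π) s)
    (hw'cont : ContinuousOn w' (Icc 0 π)) (hw0 : w 0 = 0) (hwpi : w π = 0)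
    (hw'lt : ∀ s ∈ Icc (0:ℝ) π, |w' s| < 1) (ht : |t| ≤ 1) :
    t * ∫ s in (0:ℝ)..π, log (sin (s + t * w s) / sin (s - t * w s)) * w' s =
      ∫ s in (0:ℝ)..π, logSinDefect w t s := by
  have ht' : |-t| ≤ 1 := by rwa [abs_neg]
  have hL := intervalIntegrable_log_sin_add_mul_mul hderiv hw'cont hw0 hwpi hw'lt ht
    (continuousOn_const (c := (1:ℝ)))
  have hL' := intervalIntegrable_log_sin_add_mul_mul hderiv hw'cont hw0 hwpi hw'lt ht'
    (continuousOn_const (c := (1:ℝ)))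
  have hLw := intervalIntegrable_log_sin_add_mul_mul hderiv hw'cont hw0 hwpi hw'lt ht hw'cont
  have hLw' := intervalIntegrable_log_sin_add_mul_mul hderiv hw'cont hw0 hwpi hw'lt ht' hw'cont
  have h := integral_log_sin_add_mul_add_mul_integral hderiv hw'cont hw0 hwpi hw'lt ht
  have h' := integral_log_sin_add_mul_add_mul_integral hderiv hw'cont hw0 hwpi hw'lt ht'
  simp only [mul_one] at hL hL'
  simp only [neg_mul, ← sub_eq_add_neg] at hL' hLw' h'
  have hsplit : ∫ s in (0:ℝ)..π, log (sin (s + t * w s) / sin (s - t * w s)) * w' s =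
      (∫ s in (0:ℝ)..π, log (sin (s + t * w s)) * w' s) -
        ∫ s in (0:ℝ)..π, log (sin (s - t * w s)) * w' s := by
    rw [← intervalIntegral.integral_sub hLw hLw']
    refine intervalIntegral.integral_congr fun s hs => ?_
    rw [uIcc_of_le pi_pos.le] at hs
    simp only [log_sin_add_mul_div_sin_sub_mul hderiv hw0 hwpi hw'lt ht hs, sub_mul]
  have hL0 : IntervalIntegrable (fun s => log (sin s)) volume 0 π := intervalIntegrable_log_sin
  unfold logSinDefect
  rw [hsplit, intervalIntegral.integral_sub ((hL0.const_mul 2).sub hL) hL',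
    intervalIntegral.integral_sub (hL0.const_mul 2) hL,
    intervalIntegral.integral_const_mul]
  linear_combination h + h'

lemma intervalIntegrable_logSinDefect
    (hderiv : ∀ s ∈ Icc (0:ℝ) π, HasDerivWithinAt w (w' s) (Icc 0 π) s)
    (hw'cont : ContinuousOn w' (Icc 0 π)) (hw0 : w 0 = 0) (hwpi : w π = 0)
    (hw'lt : ∀ s ∈ Icc (0:ℝ) π, |w' s| < 1) (ht : |t| ≤ 1) :
    IntervalIntegrable (logSinDefect w t) volume 0 π := by
  have hL := intervalIntegrable_log_sin_add_mul_mul hderiv hw'cont hw0 hwpi hw'lt ht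
    (continuousOn_const (c := (1:ℝ)))
  have hL' := intervalIntegrable_log_sin_add_mul_mul hderiv hw'cont hw0 hwpi hw'lt
    (t := -t) (by rwa [abs_neg]) (continuousOn_const (c := (1:ℝ)))
  simp only [mul_one, neg_mul, ← sub_eq_add_neg] at hL hL'
  have hL0 : IntervalIntegrable (fun s => log (sin s)) volume 0 π := intervalIntegrable_log_sin
  exact ((hL0.const_mul 2).sub hL).sub hL'

lemma strictMonoOn_integral_logSinDefect_div
    (hderiv : ∀ s ∈ Icc (0:ℝ) π, HasDerivWithinAt w (w' s) (Icc 0 π) s)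
    (hw'cont : ContinuousOn w' (Icc 0 π)) (hw0 : w 0 = 0) (hwpi : w π = 0)
    (hw'lt : ∀ s ∈ Icc (0:ℝ) π, |w' s| < 1) (hne : ∃ s ∈ Icc (0:ℝ) π, w s ≠ 0) :
    StrictMonoOn (fun t => ∫ s in (0:ℝ)..π, logSinDefect w t s / t) (Icc 0 1) := by
  intro t₁ h₁ t₂ h₂ h12
  set q : ℝ → ℝ → ℝ := fun t s => logSinDefect w t s / t with hq
  have hq_int : ∀ t ∈ Icc (0:ℝ) 1, IntervalIntegrable (q t) volume 0 π := fun t ht =>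
    (intervalIntegrable_logSinDefect hderiv hw'cont hw0 hwpi hw'lt
      (abs_le.2 ⟨by linarith [ht.1], ht.2⟩)).div_const t
  have hlt : ∀ s ∈ Ioo 0 π, w s ≠ 0 → q t₁ s < q t₂ s := fun s hs hws =>
    strictConcaveOn_log_sin.strictMonoOn_symmetric_secant hws
      (fun τ hτ => add_mul_mem_Ioo hderiv hw0 hwpi hw'lt (abs_le.2 hτ) hs) h₁ h₂ h12
  have hzero : ∀ t s, w s = 0 → q t s = 0 := fun t s hws => by
    simp only [hq, logSinDefect, hws, mul_zero, add_zero, sub_zero]; ring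
  refine intervalIntegral.integral_lt_integral_of_ae_le_of_measure_setOfPred_lt_ne_zero
    pi_pos.le (hq_int t₁ h₁) (hq_int t₂ h₂) ?_ ?_
  · refine (ae_restrict_iff' measurableSet_Ioc).2 (Filter.Eventually.of_forall fun s hs => ?_)
    show q t₁ s ≤ q t₂ s
    rcases eq_or_ne (w s) 0 with hws | hws
    · rw [hzero t₁ s hws, hzero t₂ s hws]
    · exact (hlt s ⟨hs.1, hs.2.lt_of_ne (by rintro rfl; exact hws hwpi)⟩ hws).le
  · set U := Ioo 0 π ∩ w ⁻¹' {0}ᶜ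
    have hU : IsOpen U := ContinuousOn.isOpen_inter_preimage
      (fun s hs => (hderiv s (Ioo_subset_Icc_self hs)).continuousWithinAt.mono
        Ioo_subset_Icc_self) isOpen_Ioo isOpen_compl_singleton
    obtain ⟨s₀, hs₀, hws₀⟩ := hne
    have hU₀ : s₀ ∈ U := ⟨⟨hs₀.1.lt_of_ne (by rintro rfl; exact hws₀ hw0),
      hs₀.2.lt_of_ne (by rintro rfl; exact hws₀ hwpi)⟩, hws₀⟩
    refine (pos_iff_ne_zero.2 (hU.measure_ne_zero volume ⟨s₀, hU₀⟩)).trans_le ?_ |>.ne'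
    calc volume U ≤ volume ({s | q t₁ s < q t₂ s} ∩ Ioc 0 π) :=
          measure_mono fun s hs => ⟨hlt s hs.1 hs.2, Ioo_subset_Ioc_self hs.1⟩
      _ ≤ _ := Measure.le_restrict_apply _ _

end

/-- If `w : [0,π] → ℝ` is C¹ with `w(0) = w(π) = 0`, `|w'| < 1`, and `w` not identically
zero, and `F(t) = ∫₀^π log( sin(s + t·w(s)) / sin(s − t·w(s)) )·w'(s) ds`, then `F(0) = 0`,
`F` is strictly increasing on `[0,1]`, and `F(t) > 0` for `t ∈ (0,1]`. -/
theorem stmt_6 (w w' : ℝ → ℝ)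
    (hderiv : ∀ s ∈ Set.Icc (0:ℝ) π, HasDerivWithinAt w (w' s) (Set.Icc 0 π) s)
    (hw'cont : ContinuousOn w' (Set.Icc 0 π))
    (hw0 : w 0 = 0) (hwpi : w π = 0)
    (hw'lt : ∀ s ∈ Set.Icc (0:ℝ) π, |w' s| < 1)
    (hne : ∃ s ∈ Set.Icc (0:ℝ) π, w s ≠ 0)
    (F : ℝ → ℝ)
    (hF : ∀ t, F t = ∫ s in (0:ℝ)..π,
      Real.log (Real.sin (s + t * w s) / Real.sin (s - t * w s)) * w' s) :
    F 0 = 0 ∧ StrictMonoOn F (Set.Icc 0 1) ∧ ∀ t ∈ Set.Ioc (0:ℝ) 1, 0 < F t := by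
  have hF0 : F 0 = 0 := by simp [hF]
  have hFeq : ∀ t ∈ Icc (0:ℝ) 1, F t = ∫ s in (0:ℝ)..π, logSinDefect w t s / t := by
    intro t ht
    rcases ht.1.eq_or_lt with rfl | htpos
    · simp [hF0]
    rw [intervalIntegral.integral_div, ← mul_integral_log_sin_div_mul_eq_integral_logSinDefect
      hderiv hw'cont hw0 hwpi hw'lt (abs_le.2 ⟨by linarith, ht.2⟩), ← hF,
      mul_div_cancel_left₀ _ htpos.ne']
  have hmono : StrictMonoOn F (Icc 0 1) := fun t₁ h₁ t₂ h₂ h12 => by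
    rw [hFeq t₁ h₁, hFeq t₂ h₂]
    exact strictMonoOn_integral_logSinDefect_div hderiv hw'cont hw0 hwpi hw'lt hne h₁ h₂ h12
  exact ⟨hF0, hmono, fun t ht =>
    hF0 ▸ hmono (left_mem_Icc.2 zero_le_one) ⟨ht.1.le, ht.2⟩ ht.1⟩
end

section
/- For λ ∈ ℝ define f_λ : [0,π] → [0,π] by f_λ(0) = 0, f_λ(π) = π, and f_λ(φ) = π/2 − arctan( e^{−λ} · cos φ / sin φ ) for φ ∈ (0,π), and let g = f_λ ∘ f_λ (the angle map after two successive wall collisions). Then for every φ ∈ (0,π), the n-th iterate satisfies gⁿ(φ) = π/2 − arctan( e^{−2nλ} · cot φ ). Consequently: if λ > 0 then gⁿ(φ) → π/2 as n → ∞ for every φ ∈ (0,π); and if λ < 0 then gⁿ(φ) → 0 for every φ ∈ (0,π/2) and gⁿ(φ) → π for every φ ∈ (π/2,π). -/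
/-!
Writing angles in `(0, π)` as `θ(s) = π/2 - arctan s`, so that `s = cot θ(s)`, the twisting map
becomes multiplication by `e^{-λ}`: `f_λ (θ s) = θ (e^{-λ} s)`. Hence `gⁿ = f_λ^{2n}` is
`θ(s) ↦ θ(e^{-2nλ} s)`, and the limits follow from those of `arctan` at `0` and `±∞`.
-/

open Real Filter Function Topology

lemma cos_div_sin_pi_div_two_sub_arctan (t : ℝ) :
    cos (π / 2 - arctan t) / sin (π / 2 - arctan t) = t := by
  rw [cos_pi_div_two_sub, sin_pi_div_two_sub, ← tan_eq_sin_div_cos, tan_arctan]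

lemma pi_div_two_sub_arctan_mem_Ioo (t : ℝ) : π / 2 - arctan t ∈ Set.Ioo 0 π := by
  constructor <;> linarith [arctan_lt_pi_div_two t, neg_pi_div_two_lt_arctan t]

lemma pi_div_two_sub_arctan_cos_div_sin {φ : ℝ} (hφ : φ ∈ Set.Ioo 0 π) :
    π / 2 - arctan (cos φ / sin φ) = φ := by
  rw [← inv_div (sin φ), ← tan_eq_sin_div_cos, ← tan_pi_div_two_sub,
    arctan_tan (by linarith [hφ.2]) (by linarith [hφ.1])]
  ring

lemma cos_div_sin_pos {φ : ℝ} (hφ : φ ∈ Set.Ioo 0 (π / 2)) : 0 < cos φ / sin φ :=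
  div_pos (cos_pos_of_mem_Ioo ⟨by linarith [hφ.1, pi_pos], hφ.2⟩)
    (sin_pos_of_pos_of_lt_pi hφ.1 (by linarith [hφ.2, pi_pos]))

lemma cos_div_sin_neg {φ : ℝ} (hφ : φ ∈ Set.Ioo (π / 2) π) : cos φ / sin φ < 0 :=
  div_neg_of_neg_of_pos (cos_neg_of_pi_div_two_lt_of_lt hφ.1 (by linarith [hφ.2, pi_pos]))
    (sin_pos_of_pos_of_lt_pi (by linarith [hφ.1, pi_pos]) hφ.2)

section Iterates

variable {f : ℝ → ℝ} {c : ℝ}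
  (hf : ∀ φ ∈ Set.Ioo 0 π, f φ = π / 2 - arctan (c * (cos φ / sin φ)))
include hf

lemma semiconj_pi_div_two_sub_arctan : Semiconj (fun s => π / 2 - arctan s) (c * ·) f := by
  intro s
  rw [hf _ (pi_div_two_sub_arctan_mem_Ioo s), cos_div_sin_pi_div_two_sub_arctan]

lemma iterate_eq_pi_div_two_sub_arctan {φ : ℝ} (hφ : φ ∈ Set.Ioo 0 π) (n : ℕ) :
    f^[n] φ = π / 2 - arctan (c ^ n * (cos φ / sin φ)) := by
  conv_lhs => rw [← pi_div_two_sub_arctan_cos_div_sin hφ]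
  rw [← ((semiconj_pi_div_two_sub_arctan hf).iterate_right n).eq, mul_left_iterate]

end Iterates

lemma tendsto_pi_div_two_sub_arctan_exp_neg_mul_atTop (t : ℝ) :
    Tendsto (fun x => π / 2 - arctan (exp (-x) * t)) atTop (𝓝 (π / 2)) := by
  have hlim : Tendsto (fun x => exp (-x) * t) atTop (𝓝 0) := by
    simpa using tendsto_exp_neg_atTop_nhds_zero.mul_const t
  simpa using tendsto_const_nhds.sub ((continuous_arctan.tendsto 0).comp hlim)

lemma tendsto_exp_neg_atBot_atTop : Tendsto (fun x => exp (-x)) atBot atTop :=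
  tendsto_exp_atTop.comp tendsto_neg_atBot_atTop

lemma tendsto_pi_div_two_sub_arctan_exp_neg_mul_atBot_of_pos {t : ℝ} (ht : 0 < t) :
    Tendsto (fun x => π / 2 - arctan (exp (-x) * t)) atBot (𝓝 0) := by
  have harctan := (tendsto_arctan_atTop.mono_right nhdsWithin_le_nhds).comp
    (tendsto_exp_neg_atBot_atTop.atTop_mul_const ht)
  simpa using tendsto_const_nhds (x := π / 2) |>.sub harctan

lemma tendsto_pi_div_two_sub_arctan_exp_neg_mul_atBot_of_neg {t : ℝ} (ht : t < 0) :
    Tendsto (fun x => π / 2 - arctan (exp (-x) * t)) atBot (𝓝 π) := by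
  have harctan := (tendsto_arctan_atBot.mono_right nhdsWithin_le_nhds).comp
    (tendsto_exp_neg_atBot_atTop.atTop_mul_const_of_neg ht)
  simpa using tendsto_const_nhds (x := π / 2) |>.sub harctan

theorem stmt_12_general (lam : ℝ) (f : ℝ → ℝ)
    (hf : ∀ φ ∈ Set.Ioo (0:ℝ) π,
      f φ = π / 2 - Real.arctan (Real.exp (-lam) * (Real.cos φ / Real.sin φ))) :
    (∀ φ ∈ Set.Ioo (0:ℝ) π, ∀ n : ℕ,
      (f ∘ f)^[n] φ
        = π / 2 - Real.arctan (Real.exp (-(2 * n * lam)) * (Real.cos φ / Real.sin φ))) ∧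
    (0 < lam → ∀ φ ∈ Set.Ioo (0:ℝ) π,
      Tendsto (fun n : ℕ => (f ∘ f)^[n] φ) atTop (nhds (π / 2))) ∧
    (lam < 0 →
      (∀ φ ∈ Set.Ioo (0:ℝ) (π / 2),
        Tendsto (fun n : ℕ => (f ∘ f)^[n] φ) atTop (nhds 0)) ∧
      (∀ φ ∈ Set.Ioo (π / 2) π,
        Tendsto (fun n : ℕ => (f ∘ f)^[n] φ) atTop (nhds π))) := by
  have hiter : ∀ φ ∈ Set.Ioo (0:ℝ) π, ∀ n : ℕ, (f ∘ f)^[n] φ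
      = π / 2 - arctan (exp (-(2 * n * lam)) * (cos φ / sin φ)) := by
    intro φ hφ n
    rw [show f ∘ f = f^[2] from rfl, ← iterate_mul, iterate_eq_pi_div_two_sub_arctan hf hφ,
      ← exp_nat_mul]
    push_cast
    ring_nf
  have hrate : Tendsto (fun n : ℕ => 2 * (n : ℝ)) atTop atTop :=
    tendsto_natCast_atTop_atTop.const_mul_atTop two_pos
  refine ⟨hiter, fun hlam φ hφ => ?_, fun hlam => ⟨fun φ hφ => ?_, fun φ hφ => ?_⟩⟩
  · exact ((tendsto_pi_div_two_sub_arctan_exp_neg_mul_atTop _).comp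
      (hrate.atTop_mul_const hlam)).congr fun n => (hiter φ hφ n).symm
  · exact ((tendsto_pi_div_two_sub_arctan_exp_neg_mul_atBot_of_pos (cos_div_sin_pos hφ)).comp
      (hrate.atTop_mul_const_of_neg hlam)).congr
      fun n => (hiter φ ⟨hφ.1, by linarith [hφ.2, pi_pos]⟩ n).symm
  · exact ((tendsto_pi_div_two_sub_arctan_exp_neg_mul_atBot_of_neg (cos_div_sin_neg hφ)).comp
      (hrate.atTop_mul_const_of_neg hlam)).congr
      fun n => (hiter φ ⟨by linarith [hφ.1, pi_pos], hφ.2⟩ n).symm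

/-- For the map `f_λ` (with `f_λ(0)=0`, `f_λ(π)=π` and
`f_λ(φ) = π/2 − arctan(e^{−λ}·cos φ / sin φ)` on `(0,π)`) and `g = f_λ ∘ f_λ`, the iterates
satisfy `gⁿ(φ) = π/2 − arctan(e^{−2nλ}·cot φ)` for `φ ∈ (0,π)`. Consequently, if `λ > 0`
then `gⁿ(φ) → π/2` for every `φ ∈ (0,π)`, and if `λ < 0` then `gⁿ(φ) → 0` for
`φ ∈ (0,π/2)` and `gⁿ(φ) → π` for `φ ∈ (π/2,π)`. -/
theorem stmt_12 (lam : ℝ) (f : ℝ → ℝ)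
    (hf0 : f 0 = 0) (hfpi : f π = π)
    (hf : ∀ φ ∈ Set.Ioo (0:ℝ) π,
      f φ = π / 2 - Real.arctan (Real.exp (-lam) * (Real.cos φ / Real.sin φ))) :
    (∀ φ ∈ Set.Ioo (0:ℝ) π, ∀ n : ℕ,
      (f ∘ f)^[n] φ
        = π / 2 - Real.arctan (Real.exp (-(2 * n * lam)) * (Real.cos φ / Real.sin φ))) ∧
    (0 < lam → ∀ φ ∈ Set.Ioo (0:ℝ) π,
      Tendsto (fun n : ℕ => (f ∘ f)^[n] φ) atTop (nhds (π / 2))) ∧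
    (lam < 0 →
      (∀ φ ∈ Set.Ioo (0:ℝ) (π / 2),
        Tendsto (fun n : ℕ => (f ∘ f)^[n] φ) atTop (nhds 0)) ∧
      (∀ φ ∈ Set.Ioo (π / 2) π,
        Tendsto (fun n : ℕ => (f ∘ f)^[n] φ) atTop (nhds π))) :=
  stmt_12_general lam f hf
end

section
/- Let N ≥ 1 and let u₁,…,u_N, v₁,…,v_N be real numbers satisfying the energy normalization u₁² + v₁² + … + u_N² + v_N² = N. If u₁ + … + u_N > √(N(N−1)), then u_i > 0 for every i = 1,…,N. -/
/-! If some `u j ≤ 0`, the remaining `N - 1` velocities carry at least the total momentum, while by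
Cauchy–Schwarz their sum is at most `√((N - 1) ∑ uᵢ²) ≤ √((N - 1) N)`. -/

open Real Finset

theorem sum_le_sqrt_card_mul_sum_sq {ι : Type*} (s : Finset ι) (u : ι → ℝ) :
    ∑ i ∈ s, u i ≤ √(#s * ∑ i ∈ s, u i ^ 2) :=
  (le_abs_self _).trans (Real.abs_le_sqrt sq_sum_le_card_mul_sum_sq)

theorem pos_of_sqrt_mul_card_pred_lt_sum {ι : Type*} [Fintype ι] (u : ι → ℝ) (E : ℝ)
    (hE : ∑ i, u i ^ 2 ≤ E) (hsum : √(E * (Fintype.card ι - 1)) < ∑ i, u i) :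
    ∀ i, 0 < u i := by
  classical
  intro j
  by_contra! hj
  set s := univ.erase j
  have hcard : (#s : ℝ) = Fintype.card ι - 1 := by
    rw [card_erase_of_mem (mem_univ j), card_univ, Nat.cast_pred (Fintype.card_pos_iff.2 ⟨j⟩)]
  have hsq : ∑ i ∈ s, u i ^ 2 ≤ E :=
    (sum_le_sum_of_subset_of_nonneg (erase_subset j univ) fun i _ _ => sq_nonneg (u i)).trans hE
  have : ∑ i, u i ≤ √(E * (Fintype.card ι - 1)) := calc
    ∑ i, u i = u j + ∑ i ∈ s, u i := (add_sum_erase _ _ (mem_univ j)).symm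
    _ ≤ ∑ i ∈ s, u i := by linarith
    _ ≤ √(#s * ∑ i ∈ s, u i ^ 2) := sum_le_sqrt_card_mul_sum_sq s u
    _ ≤ √(E * (Fintype.card ι - 1)) := by
      rw [hcard, mul_comm]
      gcongr
      simpa [hcard] using (#s).cast_nonneg (α := ℝ)
  linarith

theorem stmt_13_general (N : ℕ) (u v : Fin N → ℝ)
    (henergy : ∑ i, (u i ^ 2 + v i ^ 2) = (N : ℝ))
    (hmom : Real.sqrt ((N : ℝ) * ((N : ℝ) - 1)) < ∑ i, u i) :
    ∀ i, 0 < u i := by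
  have hE : ∑ i, u i ^ 2 ≤ N :=
    henergy ▸ sum_le_sum fun i _ => le_add_of_nonneg_right (sq_nonneg (v i))
  exact pos_of_sqrt_mul_card_pred_lt_sum u N hE (by simpa using hmom)

/-- If `∑ᵢ (uᵢ² + vᵢ²) = N` and `∑ᵢ uᵢ > √(N(N−1))`, then `uᵢ > 0` for every `i`. -/
theorem stmt_13 (N : ℕ) (hN : 1 ≤ N) (u v : Fin N → ℝ)
    (henergy : ∑ i, (u i ^ 2 + v i ^ 2) = (N : ℝ))
    (hmom : Real.sqrt ((N : ℝ) * ((N : ℝ) - 1)) < ∑ i, u i) :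
    ∀ i, 0 < u i :=
  stmt_13_general N u v henergy hmom
end

section
/- Let λ < 0 and let (u⁻, v⁻) and (u⁺, v⁺) be velocity vectors with v⁻ ≠ 0, v⁺ ≠ 0, satisfying energy conservation (u⁺)² + (v⁺)² = (u⁻)² + (v⁻)² and the twisting reflection rule u⁺/|v⁺| = e^{−λ} · u⁻/|v⁻|. If u⁻ > 0, then u⁺ > u⁻ and |v⁺| < |v⁻|. -/
/-!
Write `k = e^{-λ} > 1` and `a = |v⁻|`, `a' = |v⁺|` for the vertical speeds. The rule forces
`u⁺ = k u⁻ a' / a > 0`. If the vertical speed did not drop (`a ≤ a'`), the horizontal one would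
grow (`u⁺ ≥ k u⁻ > u⁻`), so both components would gain energy; hence `a' < a`, and then energy
conservation gives `(u⁻)² < (u⁺)²`, i.e. `u⁻ < u⁺`.
-/

open Real

section TwistedReflection

variable {k u u' a a' : ℝ}

lemma pos_of_div_eq_mul_div (hk : 0 < k) (hu : 0 < u) (ha : 0 < a) (ha' : 0 ≤ a')
    (hrule : u' / a' = k * (u / a)) : 0 < u' ∧ 0 < a' := by
  have hquot : 0 < u' / a' := hrule ▸ by positivity
  rcases div_pos_iff.mp hquot with hpos | ⟨-, hneg⟩
  · exact hpos
  · exact absurd hneg ha'.not_gt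

lemma lt_of_div_eq_mul_div_of_sq_add_sq_eq (hk : 1 < k) (hu : 0 < u) (ha : 0 < a) (ha' : 0 < a')
    (hrule : u' / a' = k * (u / a)) (henergy : u' ^ 2 + a' ^ 2 = u ^ 2 + a ^ 2) : a' < a := by
  by_contra! hle
  have hu' : u' = k * u * (a' / a) := by
    field_simp at hrule ⊢
    linarith
  have hlt : u < u' :=
    calc u < k * u := lt_mul_left hu hk
      _ ≤ k * u * (a' / a) := le_mul_of_one_le_right (by positivity) ((one_le_div ha).2 hle)
      _ = u' := hu'.symm
  nlinarith

theorem lt_and_lt_of_div_eq_mul_div_of_sq_add_sq_eq (hk : 1 < k) (hu : 0 < u) (ha : 0 < a)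
    (ha' : 0 ≤ a') (hrule : u' / a' = k * (u / a))
    (henergy : u' ^ 2 + a' ^ 2 = u ^ 2 + a ^ 2) : u < u' ∧ a' < a := by
  obtain ⟨hu', ha'⟩ := pos_of_div_eq_mul_div (zero_lt_one.trans hk) hu ha ha' hrule
  have hlt : a' < a := lt_of_div_eq_mul_div_of_sq_add_sq_eq hk hu ha ha' hrule henergy
  exact ⟨lt_of_pow_lt_pow_left₀ 2 hu'.le (by nlinarith), hlt⟩

end TwistedReflection

theorem stmt_15_general (lam : ℝ) (hlam : lam < 0) (um vm up vp : ℝ)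
    (hvm : vm ≠ 0)
    (henergy : up ^ 2 + vp ^ 2 = um ^ 2 + vm ^ 2)
    (hrule : up / |vp| = Real.exp (-lam) * (um / |vm|))
    (hum : 0 < um) :
    um < up ∧ |vp| < |vm| := by
  have hk : 1 < Real.exp (-lam) := one_lt_exp_iff.mpr (neg_pos.mpr hlam)
  refine lt_and_lt_of_div_eq_mul_div_of_sq_add_sq_eq hk hum (abs_pos.mpr hvm) (abs_nonneg vp)
    hrule ?_
  rwa [sq_abs, sq_abs]

/-- For `λ < 0`, if the incoming and outgoing velocities `(u⁻,v⁻)`, `(u⁺,v⁺)` (with nonzero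
vertical components) satisfy energy conservation and the twisting rule
`u⁺/|v⁺| = e^{−λ}·u⁻/|v⁻|`, and `u⁻ > 0`, then `u⁺ > u⁻` and `|v⁺| < |v⁻|`. -/
theorem stmt_15 (lam : ℝ) (hlam : lam < 0) (um vm up vp : ℝ)
    (hvm : vm ≠ 0) (hvp : vp ≠ 0)
    (henergy : up ^ 2 + vp ^ 2 = um ^ 2 + vm ^ 2)
    (hrule : up / |vp| = Real.exp (-lam) * (um / |vm|))
    (hum : 0 < um) :
    um < up ∧ |vp| < |vm| :=
  stmt_15_general lam hlam um vm up vp hvm henergy hrule hum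
end

section
/- Let h be an orientation-reversing homeomorphism of [0,π] (a continuous strictly decreasing bijection of [0,π] onto itself) with (unique) fixed point φ₀ ∈ (0,π), and let g = h ∘ h. Let I be a connected component of the open set { φ ∈ [0,π] : g(φ) ≠ φ }. Then: (i) h(I) is also a connected component of this set, and h(h(I)) = I; (ii) I and h(I) lie on opposite sides of φ₀, i.e. one of them is contained in (0, φ₀) and the other in (φ₀, π); and (iii) the points of I move under g toward φ₀ if and only if the points of h(I) move under g toward φ₀ — precisely, (g(φ) − φ)·(φ₀ − φ) > 0 holds for all φ ∈ I if and only if (g(ψ) − ψ)·(φ₀ − ψ) > 0 holds for all ψ ∈ h(I). -/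
open Real Set

/-!
Since `g = h ∘ h` is strictly increasing, no fixed point of `g` lies between a point `φ` and
`g φ`; hence `g` maps each component of `E` into itself, and onto itself because `g` is onto.
The continuous map `h` sends `E` into `E` and so each component `I` into the component of
`h x`; applying this twice lands back in `I`, which forces `h '' I` to be that whole component.
Components avoid the fixed point `φ₀` of `h`, and `h` exchanges the two sides of `φ₀`. Finally a
strictly decreasing map preserves whether two points lie on the same side of a third; applied
to `g φ` and `φ₀` relative to `φ`, it shows that `φ` moves toward `φ₀` iff `h φ` does.
-/

section Order

variable {α : Type*} [LinearOrder α] {s : Set α}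

lemma StrictMonoOn.uIcc_subset_nonFixed {g : α → α} (hg : StrictMonoOn g s)
    (hs : s.OrdConnected) (hgs : MapsTo g s s) {x : α} (hx : x ∈ {y ∈ s | g y ≠ y}) :
    uIcc x (g x) ⊆ {y ∈ s | g y ≠ y} := by
  intro y hy
  have hys : y ∈ s := hs.uIcc_subset hx.1 (hgs hx.1) hy
  refine ⟨hys, fun hfix => ?_⟩
  rcases hx.2.lt_or_gt with hlt | hlt
  · rw [uIcc_of_ge hlt.le] at hy
    have hyx : y < x := hy.2.lt_of_ne (by rintro rfl; exact hx.2 hfix)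
    exact (hg hys hx.1 hyx).not_ge (by rw [hfix]; exact hy.1)
  · rw [uIcc_of_le hlt.le] at hy
    have hxy : x < y := hy.1.lt_of_ne' (by rintro rfl; exact hx.2 hfix)
    exact (hg hx.1 hys hxy).not_ge (by rw [hfix]; exact hy.2)

lemma AntitoneOn.apply_left_eq_of_surjOn {h : α → α} {a b : α} (hh : AntitoneOn h (Icc a b))
    (hmaps : MapsTo h (Icc a b) (Icc a b)) (hsurj : SurjOn h (Icc a b) (Icc a b)) (hab : a ≤ b) :
    h a = b := by
  obtain ⟨c, hc, hcb⟩ := hsurj (right_mem_Icc.2 hab)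
  exact (hmaps (left_mem_Icc.2 hab)).2.antisymm (hcb ▸ hh (left_mem_Icc.2 hab) hc hc.1)

lemma AntitoneOn.apply_right_eq_of_surjOn {h : α → α} {a b : α} (hh : AntitoneOn h (Icc a b))
    (hmaps : MapsTo h (Icc a b) (Icc a b)) (hsurj : SurjOn h (Icc a b) (Icc a b)) (hab : a ≤ b) :
    h b = a := by
  obtain ⟨c, hc, hca⟩ := hsurj (left_mem_Icc.2 hab)
  exact (hca ▸ hh hc (right_mem_Icc.2 hab) hc.2).antisymm (hmaps (right_mem_Icc.2 hab)).1

lemma Set.OrdConnected.subset_Iio_or_subset_Ioi (hs : s.OrdConnected) {c : α} (hc : c ∉ s) :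
    s ⊆ Iio c ∨ s ⊆ Ioi c := by
  by_contra! hcon
  obtain ⟨⟨a, has, hca⟩, ⟨b, hbs, hbc⟩⟩ := And.imp not_subset.1 not_subset.1 hcon
  exact hc (hs.out hbs has ⟨not_lt.1 hbc, not_lt.1 hca⟩)

lemma StrictAntiOn.subset_Ioo_and_image_subset_Ioo_or {h : α → α} {a b c : α}
    (hh : StrictAntiOn h (Icc a b)) (ha : h a = b) (hb : h b = a) (hc : c ∈ Icc a b)
    (hfix : h c = c) (hs : s.OrdConnected) (hsub : s ⊆ Ioo a b) (hcs : c ∉ s) :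
    (s ⊆ Ioo a c ∧ h '' s ⊆ Ioo c b) ∨ (s ⊆ Ioo c b ∧ h '' s ⊆ Ioo a c) := by
  rcases hs.subset_Iio_or_subset_Ioi hcs with hlt | hgt
  · have hleft : s ⊆ Ioo a c := fun φ hφ => ⟨(hsub hφ).1, hlt hφ⟩
    have hmaps := (hh.mono (Icc_subset_Icc_right hc.2)).mapsTo_Ioo
    rw [hfix, ha] at hmaps
    exact .inl ⟨hleft, (image_mono hleft).trans hmaps.image_subset⟩
  · have hright : s ⊆ Ioo c b := fun φ hφ => ⟨hgt hφ, (hsub hφ).2⟩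
    have hmaps := (hh.mono (Icc_subset_Icc_left hc.1)).mapsTo_Ioo
    rw [hfix, hb] at hmaps
    exact .inr ⟨hright, (image_mono hright).trans hmaps.image_subset⟩

end Order

lemma StrictAntiOn.mul_sub_pos_iff {α β : Type*} [Ring α] [LinearOrder α] [IsStrictOrderedRing α]
    [Ring β] [LinearOrder β] [IsStrictOrderedRing β] {f : α → β} {s : Set α}
    (hf : StrictAntiOn f s) {a b c : α} (ha : a ∈ s) (hb : b ∈ s) (hc : c ∈ s) :
    0 < (a - b) * (c - b) ↔ 0 < (f a - f b) * (f c - f b) := by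
  simp only [mul_pos_iff, sub_pos, sub_neg, hf.lt_iff_gt ha hb, hf.lt_iff_gt hb ha,
    hf.lt_iff_gt hc hb, hf.lt_iff_gt hb hc]
  tauto

lemma Set.InjOn.mapsTo_nonFixed_comp_self {α : Type*} {h : α → α} {s : Set α}
    (hinj : InjOn h s) (hmaps : MapsTo h s s) :
    MapsTo h {y ∈ s | h (h y) ≠ y} {y ∈ s | h (h y) ≠ y} :=
  fun _ hy => ⟨hmaps hy.1, fun hfix => hy.2 (hinj (hmaps (hmaps hy.1)) hy.1 hfix)⟩

section Components

variable {α : Type*} [ConditionallyCompleteLinearOrder α] [TopologicalSpace α] [OrderTopology α]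
  [DenselyOrdered α] {s : Set α}

lemma StrictMonoOn.apply_mem_connectedComponentIn_nonFixed {g : α → α} (hg : StrictMonoOn g s)
    (hs : s.OrdConnected) (hgs : MapsTo g s s) {x : α} (hx : x ∈ {y ∈ s | g y ≠ y}) :
    g x ∈ connectedComponentIn {y ∈ s | g y ≠ y} x :=
  isPreconnected_uIcc.subset_connectedComponentIn left_mem_uIcc
    (hg.uIcc_subset_nonFixed hs hgs hx) right_mem_uIcc

lemma StrictMonoOn.image_connectedComponentIn_nonFixed {g : α → α} (hg : StrictMonoOn g s)
    (hs : s.OrdConnected) (hgs : MapsTo g s s) (hsurj : SurjOn g s s) (x : α) :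
    g '' connectedComponentIn {y ∈ s | g y ≠ y} x = connectedComponentIn {y ∈ s | g y ≠ y} x := by
  set E := {y ∈ s | g y ≠ y}
  refine Subset.antisymm ?_ fun y hy => ?_
  · rintro _ ⟨y, hy, rfl⟩
    rw [connectedComponentIn_eq hy]
    exact hg.apply_mem_connectedComponentIn_nonFixed hs hgs (connectedComponentIn_subset E x hy)
  obtain ⟨hys, hgy⟩ := connectedComponentIn_subset E x hy
  obtain ⟨w, hws, rfl⟩ := hsurj hys
  have hw : w ∈ E := ⟨hws, fun hfix => hgy (congrArg g hfix)⟩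
  refine ⟨w, ?_, rfl⟩
  rw [connectedComponentIn_eq hy, ← connectedComponentIn_eq
    (hg.apply_mem_connectedComponentIn_nonFixed hs hgs hw)]
  exact mem_connectedComponentIn hw

variable {h : α → α}

lemma StrictAntiOn.image_image_connectedComponentIn_nonFixed_comp_self (hh : StrictAntiOn h s)
    (hs : s.OrdConnected) (hmaps : MapsTo h s s) (hsurj : SurjOn h s s) (x : α) :
    h '' (h '' connectedComponentIn {y ∈ s | h (h y) ≠ y} x) =
      connectedComponentIn {y ∈ s | h (h y) ≠ y} x := by
  rw [image_image]
  exact (hh.comp hh hmaps).image_connectedComponentIn_nonFixed hs (hmaps.comp hmaps)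
    (hsurj.comp hsurj) x

lemma StrictAntiOn.image_connectedComponentIn_nonFixed_comp_self (hh : StrictAntiOn h s)
    (hcont : ContinuousOn h s) (hs : s.OrdConnected) (hmaps : MapsTo h s s)
    (hsurj : SurjOn h s s) {x : α} (hx : x ∈ {y ∈ s | h (h y) ≠ y}) :
    h '' connectedComponentIn {y ∈ s | h (h y) ≠ y} x =
      connectedComponentIn {y ∈ s | h (h y) ≠ y} (h x) := by
  set E := {y ∈ s | h (h y) ≠ y}
  have hE : MapsTo h E E := hh.injOn.mapsTo_nonFixed_comp_self hmaps
  have himage : ∀ y ∈ E, h '' connectedComponentIn E y ⊆ connectedComponentIn E (h y) :=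
    fun y hy => ((hcont.mono (sep_subset _ _)).image_connectedComponentIn_subset hy).trans
      (connectedComponentIn_mono _ hE.image_subset)
  have hgx : connectedComponentIn E (h (h x)) = connectedComponentIn E x :=
    (connectedComponentIn_eq <|
      (hh.comp hh hmaps).apply_mem_connectedComponentIn_nonFixed hs (hmaps.comp hmaps) hx).symm
  refine (himage x hx).antisymm ?_
  calc connectedComponentIn E (h x)
      = h '' (h '' connectedComponentIn E (h x)) :=
        (hh.image_image_connectedComponentIn_nonFixed_comp_self hs hmaps hsurj (h x)).symm
    _ ⊆ h '' connectedComponentIn E (h (h x)) := image_mono (himage (h x) (hE hx))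
    _ = h '' connectedComponentIn E x := by rw [hgx]

end Components

/-- Let `h` be an orientation-reversing homeomorphism of `[0,π]` with fixed point
`φ₀ ∈ (0,π)`, let `g = h ∘ h`, and let `I` be a connected component of the set
`E = {φ ∈ [0,π] : g(φ) ≠ φ}`. Then: (i) `h(I)` is also a connected component of `E` and
`h(h(I)) = I`; (ii) `I` and `h(I)` lie on opposite sides of `φ₀`; and (iii) the points of
`I` move under `g` toward `φ₀` iff the points of `h(I)` move under `g` toward `φ₀`. -/
theorem stmt_17 (h : ℝ → ℝ)
    (hcont : ContinuousOn h (Set.Icc 0 π))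
    (hanti : StrictAntiOn h (Set.Icc 0 π))
    (hsurj : h '' Set.Icc 0 π = Set.Icc 0 π)
    (φ₀ : ℝ) (hφ₀ : φ₀ ∈ Set.Ioo (0:ℝ) π) (hfix : h φ₀ = φ₀)
    (E : Set ℝ) (hE : E = {φ | φ ∈ Set.Icc (0:ℝ) π ∧ h (h φ) ≠ φ})
    (I : Set ℝ) (x : ℝ) (hx : x ∈ E) (hI : I = connectedComponentIn E x) :
    (∃ y ∈ E, h '' I = connectedComponentIn E y) ∧
    h '' (h '' I) = I ∧
    ((I ⊆ Set.Ioo 0 φ₀ ∧ h '' I ⊆ Set.Ioo φ₀ π) ∨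
      (I ⊆ Set.Ioo φ₀ π ∧ h '' I ⊆ Set.Ioo 0 φ₀)) ∧
    ((∀ φ ∈ I, 0 < (h (h φ) - φ) * (φ₀ - φ)) ↔
      (∀ ψ ∈ h '' I, 0 < (h (h ψ) - ψ) * (φ₀ - ψ))) := by
  subst hE hI
  set E : Set ℝ := {φ | φ ∈ Icc 0 π ∧ h (h φ) ≠ φ}
  obtain ⟨hsurjOn, hmaps⟩ := image_eq_iff_surjOn_mapsTo.1 hsurj
  have hφ₀s : φ₀ ∈ Icc 0 π := Ioo_subset_Icc_self hφ₀
  have h0 : h 0 = π := hanti.antitoneOn.apply_left_eq_of_surjOn hmaps hsurjOn pi_pos.le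
  have hπ : h π = 0 := hanti.antitoneOn.apply_right_eq_of_surjOn hmaps hsurjOn pi_pos.le
  have hIsub : connectedComponentIn E x ⊆ Ioo 0 π := by
    intro φ hφ
    obtain ⟨⟨h0φ, hφπ⟩, hmoves⟩ := connectedComponentIn_subset _ _ hφ
    refine ⟨h0φ.lt_of_ne ?_, hφπ.lt_of_ne ?_⟩ <;> rintro rfl
    · exact hmoves (by rw [h0, hπ])
    · exact hmoves (by rw [hπ, h0])
  have hφ₀I : φ₀ ∉ connectedComponentIn E x :=
    fun hφ₀I => (connectedComponentIn_subset _ _ hφ₀I).2 (by rw [hfix, hfix])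
  refine ⟨⟨h x, hanti.injOn.mapsTo_nonFixed_comp_self hmaps hx,
    hanti.image_connectedComponentIn_nonFixed_comp_self hcont ordConnected_Icc hmaps hsurjOn hx⟩,
    hanti.image_image_connectedComponentIn_nonFixed_comp_self ordConnected_Icc hmaps hsurjOn x,
    hanti.subset_Ioo_and_image_subset_Ioo_or h0 hπ hφ₀s hfix
      isPreconnected_connectedComponentIn.ordConnected hIsub hφ₀I, ?_⟩
  rw [forall_mem_image]
  refine forall₂_congr fun φ hφ => ?_
  have hφs : φ ∈ Icc 0 π := (connectedComponentIn_subset _ _ hφ).1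
  rw [hanti.mul_sub_pos_iff (hmaps (hmaps hφs)) hφs hφ₀s, hfix]
end
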